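/- arXiv:0806.3998 — 3 statements merged into one kernel-verified Lean document; each statement's English description precedes it below -/
import Mathlib

section
/- Let g be a smooth Riemannian metric on U with inverse components g^{ab}, and let e = √(det(g_{ab})) be its volume density. A torsion-free affine connection Γ on U equals the Levi-Civita connection of g if and only if the following two conditions hold: (i) there is a smooth vector field μ on U with ∂_a g^{bc} + Γ_a{}^b{}_d g^{dc} + Γ_a{}^c{}_d g^{bd} = δ_a{}^b μ^c + δ_a{}^c μ^b for all a,b,c; and (ii) ∂_a e = Γ_a{}^b{}_b · e on U. Moreover, in this case necessarily μ = 0. -/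
open scoped BigOperators

/-!  Common setup: we work on open subsets `U` of `ℝⁿ` (modelled as `Fin n → ℝ`).
A torsion-free affine connection is recorded through its Christoffel symbols
`Γ x a b c = Γ_a{}^b{}_c`, symmetric in `a, c`.  `pd F a x` is the partial
derivative `∂_a F (x)`. -/

/-- Partial derivative `∂_a F` at `x`. -/
noncomputable def pd {n : ℕ} (F : (Fin n → ℝ) → ℝ) (a : Fin n) (x : Fin n → ℝ) : ℝ :=
  fderiv ℝ F x (Pi.single a 1)

/-- Kronecker delta. -/
def kron {n : ℕ} (a b : Fin n) : ℝ := if a = b then 1 else 0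

/-- Curvature tensor `ρ_{ab}{}^c{}_d` of a connection with Christoffel symbols
`Γ x a b c = Γ_a{}^b{}_c`. -/
noncomputable def curv {n : ℕ} (Γ : (Fin n → ℝ) → Fin n → Fin n → Fin n → ℝ)
    (x : Fin n → ℝ) (a b c d : Fin n) : ℝ :=
  pd (fun y => Γ y b c d) a x - pd (fun y => Γ y a c d) b x
    + ∑ e, Γ x a c e * Γ x b e d - ∑ e, Γ x b c e * Γ x a e d

/-- Ricci tensor `Ric_{ad} = ρ_{ba}{}^b{}_d`. -/
noncomputable def ricci {n : ℕ} (Γ : (Fin n → ℝ) → Fin n → Fin n → Fin n → ℝ)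
    (x : Fin n → ℝ) (a d : Fin n) : ℝ :=
  ∑ b, curv Γ x b a b d

/-- Projective Schouten tensor `P_{ab} = Ric_{ab}/(n-1)`. -/
noncomputable def projP {n : ℕ} (Γ : (Fin n → ℝ) → Fin n → Fin n → Fin n → ℝ)
    (x : Fin n → ℝ) (a b : Fin n) : ℝ :=
  ricci Γ x a b / ((n : ℝ) - 1)

/-- Projective Weyl tensor `W_{ab}{}^c{}_d = ρ_{ab}{}^c{}_d - δ_a{}^c P_{bd} + δ_b{}^c P_{ad}`. -/
noncomputable def projW {n : ℕ} (Γ : (Fin n → ℝ) → Fin n → Fin n → Fin n → ℝ)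
    (x : Fin n → ℝ) (a b c d : Fin n) : ℝ :=
  curv Γ x a b c d - kron a c * projP Γ x b d + kron b c * projP Γ x a d

/-- Covariant derivative `∇_a P_{bc}` of the projective Schouten tensor. -/
noncomputable def nablaP {n : ℕ} (Γ : (Fin n → ℝ) → Fin n → Fin n → Fin n → ℝ)
    (x : Fin n → ℝ) (a b c : Fin n) : ℝ :=
  pd (fun y => projP Γ y b c) a x - ∑ d, Γ x a d b * projP Γ x d c
    - ∑ d, Γ x a d c * projP Γ x b d

/-- Cotton–York tensor `Y_{abc} = ½(∇_a P_{bc} - ∇_b P_{ac})`. -/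
noncomputable def cottonY {n : ℕ} (Γ : (Fin n → ℝ) → Fin n → Fin n → Fin n → ℝ)
    (x : Fin n → ℝ) (a b c : Fin n) : ℝ :=
  (nablaP Γ x a b c - nablaP Γ x b a c) / 2

/-- Covariant derivative `∇_a σ^{bc}` of a contravariant symmetric 2-tensor field. -/
noncomputable def nablaSig {n : ℕ} (Γ : (Fin n → ℝ) → Fin n → Fin n → Fin n → ℝ)
    (σ : (Fin n → ℝ) → Fin n → Fin n → ℝ) (x : Fin n → ℝ) (a b c : Fin n) : ℝ :=
  pd (fun y => σ y b c) a x + ∑ d, Γ x a b d * σ x d c + ∑ d, Γ x a c d * σ x b d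

/-- Covariant derivative `∇_a μ^b` of a vector field. -/
noncomputable def nablaVec {n : ℕ} (Γ : (Fin n → ℝ) → Fin n → Fin n → Fin n → ℝ)
    (μ : (Fin n → ℝ) → Fin n → ℝ) (x : Fin n → ℝ) (a b : Fin n) : ℝ :=
  pd (fun y => μ y b) a x + ∑ c, Γ x a b c * μ x c

open Matrix

section pdlemmas
variable {n : ℕ} {a : Fin n} {x : Fin n → ℝ}

theorem pd_hasFDerivAt {F : (Fin n → ℝ) → ℝ} {F' : (Fin n → ℝ) →L[ℝ] ℝ}
    (h : HasFDerivAt F F' x) : pd F a x = F' (Pi.single a 1) := by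
  rw [pd, h.fderiv]

theorem pd_const (c : ℝ) : pd (fun _ => c) a x = 0 := by
  rw [pd_hasFDerivAt (hasFDerivAt_const c x)]; rfl

theorem pd_congr_nhds {F G : (Fin n → ℝ) → ℝ} {U : Set (Fin n → ℝ)} (hU : IsOpen U)
    (hx : x ∈ U) (h : ∀ y ∈ U, F y = G y) : pd F a x = pd G a x := by
  unfold pd
  rw [Filter.EventuallyEq.fderiv_eq (Filter.eventuallyEq_of_mem (hU.mem_nhds hx) h)]

theorem pd_sum {ι : Type*} (s : Finset ι) {F : ι → (Fin n → ℝ) → ℝ}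
    (h : ∀ i ∈ s, DifferentiableAt ℝ (F i) x) :
    pd (fun y => ∑ i ∈ s, F i y) a x = ∑ i ∈ s, pd (F i) a x := by
  unfold pd
  rw [fderiv_fun_sum h]
  simp

theorem pd_mul {F G : (Fin n → ℝ) → ℝ} (hF : DifferentiableAt ℝ F x)
    (hG : DifferentiableAt ℝ G x) :
    pd (fun y => F y * G y) a x = pd F a x * G x + F x * pd G a x := by
  unfold pd
  rw [fderiv_fun_mul hF hG]
  simp; ring

theorem pd_const_mul {F : (Fin n → ℝ) → ℝ} (hF : DifferentiableAt ℝ F x) (c : ℝ) :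
    pd (fun y => c * F y) a x = c * pd F a x := by
  rw [pd_mul (differentiableAt_const c) hF, pd_const, zero_mul, zero_add]

theorem pd_add {F G : (Fin n → ℝ) → ℝ} (hF : DifferentiableAt ℝ F x)
    (hG : DifferentiableAt ℝ G x) :
    pd (fun y => F y + G y) a x = pd F a x + pd G a x := by
  unfold pd; rw [fderiv_fun_add hF hG]; simp

theorem pd_sub {F G : (Fin n → ℝ) → ℝ} (hF : DifferentiableAt ℝ F x)
    (hG : DifferentiableAt ℝ G x) :
    pd (fun y => F y - G y) a x = pd F a x - pd G a x := by
  unfold pd; rw [fderiv_fun_sub hF hG]; simp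

end pdlemmas

section kron
variable {n : ℕ}

theorem sum_kron_mul (b : Fin n) (f : Fin n → ℝ) : ∑ d, kron b d * f d = f b := by
  simp [kron]

theorem sum_mul_kron (b : Fin n) (f : Fin n → ℝ) : ∑ d, f d * kron d b = f b := by
  simp [kron]

theorem sum_mul_kron' (b : Fin n) (f : Fin n → ℝ) : ∑ d, f d * kron b d = f b := by
  simp [kron, eq_comm]

end kron



section setup
variable {n : ℕ} {U : Set (Fin n → ℝ)}
  {g ginv : (Fin n → ℝ) → Fin n → Fin n → ℝ}

theorem matprod_eq_one (hginv : ∀ x ∈ U, ∀ a b, (∑ d, g x a d * ginv x d b) = kron a b)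
    {x : Fin n → ℝ} (hx : x ∈ U) :
    (Matrix.of (g x)) * (Matrix.of (ginv x)) = 1 := by
  ext a b
  rw [Matrix.mul_apply]
  simpa [kron, Matrix.one_apply] using hginv x hx a b

theorem ginv_eq_inv (hginv : ∀ x ∈ U, ∀ a b, (∑ d, g x a d * ginv x d b) = kron a b)
    {x : Fin n → ℝ} (hx : x ∈ U) :
    (Matrix.of (g x))⁻¹ = Matrix.of (ginv x) :=
  Matrix.inv_eq_right_inv (matprod_eq_one hginv hx)

theorem ginv_left (hginv : ∀ x ∈ U, ∀ a b, (∑ d, g x a d * ginv x d b) = kron a b)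
    {x : Fin n → ℝ} (hx : x ∈ U) (a b : Fin n) :
    (∑ d, ginv x a d * g x d b) = kron a b := by
  have h := mul_eq_one_comm.mp (matprod_eq_one hginv hx)
  have := congrFun (congrFun h a) b
  rw [Matrix.mul_apply] at this
  simpa [kron, Matrix.one_apply] using this

theorem ginv_symm (hgsym : ∀ x a b, g x a b = g x b a)
    (hginv : ∀ x ∈ U, ∀ a b, (∑ d, g x a d * ginv x d b) = kron a b)
    {x : Fin n → ℝ} (hx : x ∈ U) (a b : Fin n) :
    ginv x a b = ginv x b a := by
  have hsymm : (Matrix.of (g x))ᵀ = Matrix.of (g x) := by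
    ext i j; exact hgsym x j i
  have h := ginv_eq_inv hginv hx
  have h2 : (Matrix.of (ginv x))ᵀ = Matrix.of (ginv x) := by
    rw [← h, Matrix.transpose_nonsing_inv, hsymm]
  have := congrFun (congrFun h2 b) a
  simpa [Matrix.transpose_apply] using this

theorem gdet_pos (hgsym : ∀ x a b, g x a b = g x b a)
    (hgpos : ∀ x ∈ U, ∀ v : Fin n → ℝ, v ≠ 0 → 0 < ∑ a, ∑ b, g x a b * v a * v b)
    {x : Fin n → ℝ} (hx : x ∈ U) :
    0 < (Matrix.of (g x)).det := by
  apply Matrix.PosDef.det_pos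
  apply Matrix.PosDef.of_dotProduct_mulVec_pos
  · ext i j
    simpa using hgsym x j i
  · intro v hv
    have := hgpos x hx v hv
    simpa [dotProduct, Matrix.mulVec, Finset.mul_sum, mul_assoc, mul_comm, mul_left_comm]
      using this

end setup

section smooth
variable {n : ℕ} {U : Set (Fin n → ℝ)} {M : (Fin n → ℝ) → Fin n → Fin n → ℝ}

theorem smooth_det (h : ∀ i j, ContDiffOn ℝ (⊤ : ℕ∞) (fun y => M y i j) U) :
    ContDiffOn ℝ (⊤ : ℕ∞) (fun y => (Matrix.of (M y)).det) U := by
  simp only [Matrix.det_apply']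
  apply ContDiffOn.sum
  intro σ _
  exact (contDiffOn_const).mul (contDiffOn_prod fun i _ => h (σ i) i)

theorem smooth_adjugate (h : ∀ i j, ContDiffOn ℝ (⊤ : ℕ∞) (fun y => M y i j) U) (b c : Fin n) :
    ContDiffOn ℝ (⊤ : ℕ∞) (fun y => (Matrix.of (M y)).adjugate b c) U := by
  have key : ∀ y, (Matrix.of (M y)).adjugate b c
      = (Matrix.of (fun i j => if i = c then (Pi.single b 1 : Fin n → ℝ) j else M y i j)).det := by
    intro y
    rw [Matrix.adjugate_apply]
    congr 1
    ext i j
    simp [Matrix.updateRow_apply]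
  simp only [key]
  apply smooth_det
  intro i j
  by_cases hic : i = c <;> simp [hic, contDiffOn_const, h i j]

/-- derivative of a finite product -/
theorem pd_prod {ι : Type*} [DecidableEq ι] (u : Finset ι) {F : ι → (Fin n → ℝ) → ℝ} {a : Fin n}
    {x : Fin n → ℝ} (h : ∀ i ∈ u, DifferentiableAt ℝ (F i) x) :
    pd (fun y => ∏ i ∈ u, F i y) a x
      = ∑ i ∈ u, (∏ j ∈ u.erase i, F j x) * pd (F i) a x := by
  have h' : ∀ i ∈ u, HasFDerivAt (F i) (fderiv ℝ (F i) x) x := fun i hi => (h i hi).hasFDerivAt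
  have := HasFDerivAt.finset_prod h'
  rw [pd_hasFDerivAt this]
  rw [ContinuousLinearMap.sum_apply]
  apply Finset.sum_congr rfl
  intro i hi
  simp [pd, smul_eq_mul]

end smooth

section detderiv
variable {n : ℕ} {U : Set (Fin n → ℝ)} {M : (Fin n → ℝ) → Fin n → Fin n → ℝ}

theorem cdOn_diffAt {F : (Fin n → ℝ) → ℝ} (hU : IsOpen U) (h : ContDiffOn ℝ (⊤ : ℕ∞) F U)
    {x : Fin n → ℝ} (hx : x ∈ U) : DifferentiableAt ℝ F x :=
  ((h.differentiableOn (by simp)).differentiableAt (hU.mem_nhds hx))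

theorem pd_det (hU : IsOpen U) (hM : ∀ i j, ContDiffOn ℝ (⊤ : ℕ∞) (fun y => M y i j) U)
    {x : Fin n → ℝ} (hx : x ∈ U) (a : Fin n) :
    pd (fun y => (Matrix.of (M y)).det) a x
      = ∑ c, ∑ b, ((Matrix.of (M x)).updateCol c (Pi.single b 1)).det
          * pd (fun y => M y b c) a x := by
  have hdiff : ∀ i j, DifferentiableAt ℝ (fun y => M y i j) x :=
    fun i j => cdOn_diffAt hU (hM i j) hx
  have lhs : pd (fun y => (Matrix.of (M y)).det) a x
      = ∑ σ : Equiv.Perm (Fin n), ∑ c,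
          (Equiv.Perm.sign σ : ℝ) *
            ((∏ i ∈ Finset.univ.erase c, M x (σ i) i) * pd (fun y => M y (σ c) c) a x) := by
    simp only [Matrix.det_apply', Matrix.of_apply]
    rw [pd_sum Finset.univ (fun σ _ => by
      exact (differentiableAt_const _).mul
        (HasFDerivAt.finset_prod (fun i (_ : i ∈ Finset.univ) =>
          (hdiff (σ i) i).hasFDerivAt)).differentiableAt)]
    apply Finset.sum_congr rfl
    intro σ _
    rw [pd_const_mul (HasFDerivAt.finset_prod (fun i (_ : i ∈ Finset.univ) =>
          (hdiff (σ i) i).hasFDerivAt)).differentiableAt]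
    rw [pd_prod Finset.univ (fun i _ => hdiff (σ i) i), Finset.mul_sum]
  rw [lhs]
  rw [Finset.sum_comm]
  apply Finset.sum_congr rfl
  intro c _
  have expand : ∀ b : Fin n, ((Matrix.of (M x)).updateCol c (Pi.single b 1)).det
      = ∑ σ : Equiv.Perm (Fin n),
          (Equiv.Perm.sign σ : ℝ) *
            ((if σ c = b then (1:ℝ) else 0) * ∏ i ∈ Finset.univ.erase c, M x (σ i) i) := by
    intro b
    rw [Matrix.det_apply']
    apply Finset.sum_congr rfl
    intro σ _
    congr 1
    rw [← Finset.mul_prod_erase Finset.univ _ (Finset.mem_univ c)]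
    congr 1
    · simp [Matrix.updateCol_apply, Pi.single_apply]
    · apply Finset.prod_congr rfl
      intro i hi
      have : i ≠ c := (Finset.mem_erase.mp hi).1
      simp [Matrix.updateCol_apply, this]
  simp only [expand]
  simp only [Finset.sum_mul]
  rw [Finset.sum_comm]
  apply Finset.sum_congr rfl
  intro σ _
  rw [Finset.sum_eq_single (σ c)]
  · simp [mul_assoc]
  · intro b _ hb
    simp [Ne.symm hb]
  · intro h; exact absurd (Finset.mem_univ _) h

end detderiv

section ginvcalc
variable {n : ℕ} {U : Set (Fin n → ℝ)} {g ginv : (Fin n → ℝ) → Fin n → Fin n → ℝ}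

theorem gdet_ne (hginv : ∀ x ∈ U, ∀ a b, (∑ d, g x a d * ginv x d b) = kron a b)
    {x : Fin n → ℝ} (hx : x ∈ U) : (Matrix.of (g x)).det ≠ 0 := by
  have h := matprod_eq_one hginv hx
  have : (Matrix.of (g x)).det * (Matrix.of (ginv x)).det = 1 := by
    rw [← Matrix.det_mul, h, Matrix.det_one]
  exact left_ne_zero_of_mul_eq_one this

theorem adjugate_eq_det_mul_ginv
    (hginv : ∀ x ∈ U, ∀ a b, (∑ d, g x a d * ginv x d b) = kron a b)
    {x : Fin n → ℝ} (hx : x ∈ U) (b c : Fin n) :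
    (Matrix.of (g x)).adjugate b c = (Matrix.of (g x)).det * ginv x b c := by
  have h := ginv_eq_inv hginv hx
  rw [Matrix.inv_def, Ring.inverse_eq_inv] at h
  have := congrFun (congrFun h b) c
  simp only [Matrix.smul_apply, smul_eq_mul, Matrix.of_apply] at this
  field_simp [gdet_ne hginv hx] at this ⊢
  linarith [this]

theorem updateColumn_det_eq (hgsym : ∀ x a b, g x a b = g x b a)
    (hginv : ∀ x ∈ U, ∀ a b, (∑ d, g x a d * ginv x d b) = kron a b)
    {x : Fin n → ℝ} (hx : x ∈ U) (b c : Fin n) :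
    ((Matrix.of (g x)).updateCol c (Pi.single b 1)).det
      = (Matrix.of (g x)).det * ginv x b c := by
  have hsymm : (Matrix.of (g x))ᵀ = Matrix.of (g x) := by
    ext i j; exact hgsym x j i
  have : (Matrix.of (g x)).updateCol c (Pi.single b 1)
      = ((Matrix.of (g x)).updateRow c (Pi.single b 1))ᵀ := by
    rw [← Matrix.updateCol_transpose, hsymm]
  rw [this, Matrix.det_transpose, ← Matrix.adjugate_apply]
  exact adjugate_eq_det_mul_ginv hginv hx b c

theorem smooth_ginv (hU : IsOpen U)
    (hgsm : ∀ a b, ContDiffOn ℝ (⊤ : ℕ∞) (fun x => g x a b) U)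
    (hginv : ∀ x ∈ U, ∀ a b, (∑ d, g x a d * ginv x d b) = kron a b)
    (b c : Fin n) : ContDiffOn ℝ (⊤ : ℕ∞) (fun x => ginv x b c) U := by
  apply ContDiffOn.congr
    (f := fun y => ((Matrix.of (g y)).det)⁻¹ * (Matrix.of (g y)).adjugate b c)
  · exact ((smooth_det hgsm).inv (fun y hy => gdet_ne hginv hy)).mul
      (smooth_adjugate hgsm b c)
  · intro y hy
    rw [adjugate_eq_det_mul_ginv hginv hy]
    field_simp [gdet_ne hginv hy]

theorem pd_det_g (hU : IsOpen U) (hgsym : ∀ x a b, g x a b = g x b a)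
    (hgsm : ∀ a b, ContDiffOn ℝ (⊤ : ℕ∞) (fun x => g x a b) U)
    (hginv : ∀ x ∈ U, ∀ a b, (∑ d, g x a d * ginv x d b) = kron a b)
    {x : Fin n → ℝ} (hx : x ∈ U) (a : Fin n) :
    pd (fun y => (Matrix.of (g y)).det) a x
      = (Matrix.of (g x)).det * ∑ b, ∑ c, ginv x b c * pd (fun y => g y b c) a x := by
  rw [pd_det hU hgsm hx a]
  have : ∀ c b : Fin n, ((Matrix.of (g x)).updateCol c (Pi.single b 1)).det
      * pd (fun y => g y b c) a x
      = (Matrix.of (g x)).det * (ginv x b c * pd (fun y => g y b c) a x) := by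
    intro c b
    rw [updateColumn_det_eq hgsym hginv hx b c]; ring
  simp only [this, ← Finset.mul_sum]
  rw [Finset.sum_comm]

theorem pd_ginv (hU : IsOpen U)
    (hgsm : ∀ a b, ContDiffOn ℝ (⊤ : ℕ∞) (fun x => g x a b) U)
    (hginv : ∀ x ∈ U, ∀ a b, (∑ d, g x a d * ginv x d b) = kron a b)
    {x : Fin n → ℝ} (hx : x ∈ U) (a f c : Fin n) :
    pd (fun y => ginv y f c) a x
      = -∑ d, ∑ e, ginv x f d * ginv x e c * pd (fun y => g y d e) a x := by
  have hgd : ∀ i j, DifferentiableAt ℝ (fun y => g y i j) x :=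
    fun i j => cdOn_diffAt hU (hgsm i j) hx
  have hid : ∀ i j, DifferentiableAt ℝ (fun y => ginv y i j) x :=
    fun i j => cdOn_diffAt hU (smooth_ginv hU hgsm hginv i j) hx
  have h0 : ∀ b, (∑ d, (pd (fun y => g y b d) a x * ginv x d c
        + g x b d * pd (fun y => ginv y d c) a x)) = 0 := by
    intro b
    have e1 : pd (fun y => ∑ d, g y b d * ginv y d c) a x = 0 := by
      rw [pd_congr_nhds hU hx (fun y hy => hginv y hy b c), pd_const]
    rw [pd_sum (F := fun d y => g y b d * ginv y d c) Finset.univ (fun d _ => (hgd b d).mul (hid d c))] at e1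
    rw [← e1]
    apply Finset.sum_congr rfl; intro d _
    rw [pd_mul (hgd b d) (hid d c)]
  -- multiply by ginv x f b and sum over b
  have key : ∑ b, ginv x f b * (∑ d, (pd (fun y => g y b d) a x * ginv x d c
        + g x b d * pd (fun y => ginv y d c) a x)) = 0 := by
    simp [h0]
  have expand : ∑ b, ginv x f b * (∑ d, (pd (fun y => g y b d) a x * ginv x d c
        + g x b d * pd (fun y => ginv y d c) a x))
      = (∑ b, ∑ d, ginv x f b * ginv x d c * pd (fun y => g y b d) a x)
        + pd (fun y => ginv y f c) a x := by
    have : ∀ b, ginv x f b * (∑ d, (pd (fun y => g y b d) a x * ginv x d c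
          + g x b d * pd (fun y => ginv y d c) a x))
        = (∑ d, ginv x f b * ginv x d c * pd (fun y => g y b d) a x)
          + ∑ d, ginv x f b * g x b d * pd (fun y => ginv y d c) a x := by
      intro b
      rw [Finset.mul_sum, ← Finset.sum_add_distrib]
      apply Finset.sum_congr rfl; intro d _; ring
    simp only [this]
    rw [Finset.sum_add_distrib]
    congr 1
    rw [Finset.sum_comm]
    have : ∀ d, ∑ b, ginv x f b * g x b d * pd (fun y => ginv y d c) a x
        = kron f d * pd (fun y => ginv y d c) a x := by
      intro d
      rw [← Finset.sum_mul, ginv_left hginv hx]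
    simp only [this]
    rw [sum_kron_mul]
  rw [expand] at key
  linarith [key]

end ginvcalc

section sqrtblock
variable {n : ℕ} {U : Set (Fin n → ℝ)} {g ginv : (Fin n → ℝ) → Fin n → Fin n → ℝ}
  {x : Fin n → ℝ} {a : Fin n}

theorem pd_sqrt {F : (Fin n → ℝ) → ℝ} (hF : DifferentiableAt ℝ F x) (hpos : 0 < F x) :
    pd (fun y => Real.sqrt (F y)) a x = pd F a x / (2 * Real.sqrt (F x)) := by
  have h1 := (Real.hasDerivAt_sqrt hpos.ne').comp_hasFDerivAt x hF.hasFDerivAt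
  have h2 : pd (fun y => Real.sqrt (F y)) a x
      = ((1 / (2 * Real.sqrt (F x))) • fderiv ℝ F x) (Pi.single a 1) :=
    pd_hasFDerivAt h1
  rw [h2]
  simp only [ContinuousLinearMap.coe_smul', Pi.smul_apply, smul_eq_mul]
  unfold pd
  field_simp

theorem pd_sqrtdet (hU : IsOpen U) (hgsym : ∀ x a b, g x a b = g x b a)
    (hgsm : ∀ a b, ContDiffOn ℝ (⊤ : ℕ∞) (fun x => g x a b) U)
    (hgpos : ∀ x ∈ U, ∀ v : Fin n → ℝ, v ≠ 0 → 0 < ∑ a, ∑ b, g x a b * v a * v b)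
    (hginv : ∀ x ∈ U, ∀ a b, (∑ d, g x a d * ginv x d b) = kron a b)
    (hx : x ∈ U) (a : Fin n) :
    pd (fun y => Real.sqrt ((Matrix.of (g y)).det)) a x
      = (1/2) * Real.sqrt ((Matrix.of (g x)).det)
          * ∑ b, ∑ c, ginv x b c * pd (fun y => g y b c) a x := by
  have hpos := gdet_pos hgsym hgpos hx
  have hdiff : DifferentiableAt ℝ (fun y => (Matrix.of (g y)).det) x :=
    cdOn_diffAt hU (smooth_det hgsm) hx
  rw [pd_sqrt hdiff hpos, pd_det_g hU hgsym hgsm hginv hx a]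
  have hs : Real.sqrt ((Matrix.of (g x)).det) * Real.sqrt ((Matrix.of (g x)).det)
      = (Matrix.of (g x)).det := Real.mul_self_sqrt hpos.le
  have hsne : Real.sqrt ((Matrix.of (g x)).det) ≠ 0 :=
    (Real.sqrt_pos.mpr hpos).ne'
  rw [div_eq_iff (by positivity : (2:ℝ) * Real.sqrt ((Matrix.of (g x)).det) ≠ 0)]
  linear_combination (-∑ b, ∑ c, ginv x b c * pd (fun y => g y b c) a x) * hs

end sqrtblock

/-- The Levi-Civita Christoffel symbols built from `g, ginv`. -/
noncomputable def LCmk {n : ℕ} (g ginv : (Fin n → ℝ) → Fin n → Fin n → ℝ)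
    (x : Fin n → ℝ) (a b c : Fin n) : ℝ :=
  (1/2) * ∑ d, ginv x b d *
    (pd (fun y => g y d c) a x + pd (fun y => g y d a) c x - pd (fun y => g y a c) d x)

section algebra
variable {n : ℕ} {U : Set (Fin n → ℝ)} {g ginv : (Fin n → ℝ) → Fin n → Fin n → ℝ}
  {Γ : (Fin n → ℝ) → Fin n → Fin n → Fin n → ℝ} {μ : (Fin n → ℝ) → Fin n → ℝ}

theorem pd_g_swap (hU : IsOpen U)
    (hgsm : ∀ a b, ContDiffOn ℝ (⊤ : ℕ∞) (fun x => g x a b) U)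
    (hginv : ∀ x ∈ U, ∀ a b, (∑ d, g x a d * ginv x d b) = kron a b)
    {x : Fin n → ℝ} (hx : x ∈ U) (a f c : Fin n) :
    pd (fun y => g y f c) a x
      = -∑ d, ∑ e, g x f d * g x e c * pd (fun y => ginv y d e) a x :=
  pd_ginv hU (fun a b => smooth_ginv hU hgsm hginv a b)
    (fun x hx a b => ginv_left hginv hx a b) hx a f c

theorem low (hU : IsOpen U)
    (hgsm : ∀ a b, ContDiffOn ℝ (⊤ : ℕ∞) (fun x => g x a b) U)
    (hginv : ∀ x ∈ U, ∀ a b, (∑ d, g x a d * ginv x d b) = kron a b)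
    (hmu : ∀ x ∈ U, ∀ a b c,
      pd (fun y => ginv y b c) a x + (∑ d, Γ x a b d * ginv x d c)
        + (∑ d, Γ x a c d * ginv x b d) = kron a b * μ x c + kron a c * μ x b)
    {x : Fin n → ℝ} (hx : x ∈ U) (a f c : Fin n) :
    pd (fun y => g y f c) a x
      = (∑ d, g x f d * Γ x a d c) + (∑ e, g x e c * Γ x a e f)
        - g x f a * (∑ e, g x e c * μ x e) - g x a c * (∑ e, g x f e * μ x e) := by
  rw [pd_g_swap hU hgsm hginv hx a f c]
  have subst : ∀ d e : Fin n, pd (fun y => ginv y d e) a x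
      = kron a d * μ x e + kron a e * μ x d - (∑ k, Γ x a d k * ginv x k e)
        - ∑ k, Γ x a e k * ginv x d k := by
    intro d e
    have := hmu x hx a d e
    linarith
  simp only [subst, mul_add, mul_sub, Finset.mul_sum, Finset.sum_add_distrib,
    Finset.sum_sub_distrib]
  have T1 : ∑ d, ∑ e, g x f d * g x e c * (kron a d * μ x e)
      = ∑ i, g x f a * (g x i c * μ x i) := by
    rw [Finset.sum_comm]
    apply Finset.sum_congr rfl; intro e _
    have h1 : ∀ d, g x f d * g x e c * (kron a d * μ x e)
        = kron a d * (g x f d * (g x e c * μ x e)) := by intro d; ring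
    simp only [h1]
    rw [sum_kron_mul]
  have T2 : ∑ d, ∑ e, g x f d * g x e c * (kron a e * μ x d)
      = ∑ i, g x a c * (g x f i * μ x i) := by
    apply Finset.sum_congr rfl; intro d _
    have h1 : ∀ e, g x f d * g x e c * (kron a e * μ x d)
        = kron a e * (g x e c * (g x f d * μ x d)) := by intro e; ring
    simp only [h1]
    rw [sum_kron_mul]
  have T3 : ∑ d, ∑ e, ∑ i, g x f d * g x e c * (Γ x a d i * ginv x i e)
      = ∑ d, g x f d * Γ x a d c := by
    apply Finset.sum_congr rfl; intro d _
    rw [Finset.sum_comm]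
    have inner : ∀ k, ∑ e, g x f d * g x e c * (Γ x a d k * ginv x k e)
        = g x f d * Γ x a d k * kron k c := by
      intro k
      rw [← ginv_left hginv hx k c, Finset.mul_sum]
      apply Finset.sum_congr rfl; intro e _; ring
    simp only [inner]
    rw [sum_mul_kron]
  have T4 : ∑ d, ∑ e, ∑ i, g x f d * g x e c * (Γ x a e i * ginv x d i)
      = ∑ e, g x e c * Γ x a e f := by
    rw [Finset.sum_comm]
    apply Finset.sum_congr rfl; intro e _
    rw [Finset.sum_comm]
    have inner : ∀ k, ∑ d, g x f d * g x e c * (Γ x a e k * ginv x d k)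
        = g x e c * Γ x a e k * kron f k := by
      intro k
      rw [← hginv x hx f k, Finset.mul_sum]
      apply Finset.sum_congr rfl; intro d _; ring
    simp only [inner]
    rw [sum_mul_kron']
  rw [T1, T2, T3, T4]
  ring

theorem koszul (hU : IsOpen U) (hgsym : ∀ x a b, g x a b = g x b a)
    (hgsm : ∀ a b, ContDiffOn ℝ (⊤ : ℕ∞) (fun x => g x a b) U)
    (hginv : ∀ x ∈ U, ∀ a b, (∑ d, g x a d * ginv x d b) = kron a b)
    (hΓtf : ∀ x a b c, Γ x a b c = Γ x c b a)
    (hmu : ∀ x ∈ U, ∀ a b c,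
      pd (fun y => ginv y b c) a x + (∑ d, Γ x a b d * ginv x d c)
        + (∑ d, Γ x a c d * ginv x b d) = kron a b * μ x c + kron a c * μ x b)
    {x : Fin n → ℝ} (hx : x ∈ U) (a b c : Fin n) :
    LCmk g ginv x a b c = Γ x a b c - g x a c * μ x b := by
  have inner : ∀ d, pd (fun y => g y d c) a x + pd (fun y => g y d a) c x
        - pd (fun y => g y a c) d x
      = 2 * ((∑ e, g x d e * Γ x a e c) - g x a c * ∑ e, g x d e * μ x e) := by
    intro d
    have L1 := low hU hgsm hginv hmu hx a d c
    have L2 := low hU hgsm hginv hmu hx c d a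
    have L3 := low hU hgsm hginv hmu hx d a c
    have c1 : ∑ e, g x d e * Γ x c e a = ∑ e, g x d e * Γ x a e c := by
      apply Finset.sum_congr rfl; intro e _; rw [hΓtf x c e a]
    have c2 : ∑ e, g x e c * Γ x a e d = ∑ e, g x e c * Γ x d e a := by
      apply Finset.sum_congr rfl; intro e _; rw [hΓtf x a e d]
    have c3 : ∑ e, g x e a * Γ x c e d = ∑ e, g x a e * Γ x d e c := by
      apply Finset.sum_congr rfl; intro e _; rw [hΓtf x c e d, hgsym x e a]
    have c4 : g x a d = g x d a := hgsym x a d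
    have c5 : g x a c = g x c a := hgsym x a c
    have c6 : ∑ e, g x a e * μ x e = ∑ e, g x e a * μ x e := by
      apply Finset.sum_congr rfl; intro e _; rw [hgsym x a e]
    linear_combination L1 + L2 - L3 + c1 + c2 + c3
      + (∑ e, g x e c * μ x e) * c4 + (∑ e, g x d e * μ x e) * c5 + g x d c * c6
  have k1 : ∑ d, ginv x b d * (∑ e, g x d e * Γ x a e c) = Γ x a b c := by
    simp only [Finset.mul_sum]
    rw [Finset.sum_comm]
    have h1 : ∀ e, ∑ d, ginv x b d * (g x d e * Γ x a e c)
        = kron b e * Γ x a e c := by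
      intro e
      rw [← ginv_left hginv hx b e, Finset.sum_mul]
      apply Finset.sum_congr rfl; intro d _; ring
    simp only [h1]
    rw [sum_kron_mul]
  have k2 : ∑ d, ginv x b d * (∑ e, g x d e * μ x e) = μ x b := by
    simp only [Finset.mul_sum]
    rw [Finset.sum_comm]
    have h1 : ∀ e, ∑ d, ginv x b d * (g x d e * μ x e) = kron b e * μ x e := by
      intro e
      rw [← ginv_left hginv hx b e, Finset.sum_mul]
      apply Finset.sum_congr rfl; intro d _; ring
    simp only [h1]
    rw [sum_kron_mul]
  have split : ∀ d, ginv x b d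
        * (2 * ((∑ e, g x d e * Γ x a e c) - g x a c * ∑ e, g x d e * μ x e))
      = 2 * (ginv x b d * (∑ e, g x d e * Γ x a e c))
        - 2 * g x a c * (ginv x b d * (∑ e, g x d e * μ x e)) := by
    intro d; ring
  unfold LCmk
  simp only [inner, split]
  rw [Finset.sum_sub_distrib, ← Finset.mul_sum, ← Finset.mul_sum, k1, k2]
  ring

theorem contract_ginv_g
    (hginv : ∀ x ∈ U, ∀ a b, (∑ d, g x a d * ginv x d b) = kron a b)
    {x : Fin n → ℝ} (hx : x ∈ U) (b : Fin n) (v : Fin n → ℝ) :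
    ∑ d, ginv x b d * (∑ e, g x d e * v e) = v b := by
  simp only [Finset.mul_sum]
  rw [Finset.sum_comm]
  have h1 : ∀ e, ∑ d, ginv x b d * (g x d e * v e) = kron b e * v e := by
    intro e
    rw [← ginv_left hginv hx b e, Finset.sum_mul]
    apply Finset.sum_congr rfl; intro d _; ring
  simp only [h1]
  rw [sum_kron_mul]

theorem trace_LC (hgsym : ∀ x a b, g x a b = g x b a)
    (hginv : ∀ x ∈ U, ∀ a b, (∑ d, g x a d * ginv x d b) = kron a b)
    {x : Fin n → ℝ} (hx : x ∈ U) (a : Fin n) :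
    ∑ b, LCmk g ginv x a b b
      = (1/2) * ∑ b, ∑ c, ginv x b c * pd (fun y => g y b c) a x := by
  have gsympd : ∀ f h : Fin n, pd (fun y => g y f h) = pd (fun y => g y h f) := by
    intro f h
    rw [show (fun y => g y f h) = (fun y => g y h f) from funext fun y => hgsym y f h]
  unfold LCmk
  rw [← Finset.mul_sum]
  congr 1
  simp only [mul_add, mul_sub, Finset.sum_add_distrib, Finset.sum_sub_distrib]
  have e1 : ∑ b, ∑ d, ginv x b d * pd (fun y => g y d a) b x
      = ∑ b, ∑ d, ginv x b d * pd (fun y => g y a b) d x := by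
    rw [Finset.sum_comm]
    apply Finset.sum_congr rfl; intro b _
    apply Finset.sum_congr rfl; intro d _
    rw [ginv_symm hgsym hginv hx d b, gsympd b a]
  have e2 : ∑ b, ∑ d, ginv x b d * pd (fun y => g y d b) a x
      = ∑ b, ∑ c, ginv x b c * pd (fun y => g y b c) a x := by
    rw [Finset.sum_comm]
    apply Finset.sum_congr rfl; intro b _
    apply Finset.sum_congr rfl; intro d _
    rw [ginv_symm hgsym hginv hx d b]
  rw [e1, e2]
  ring

theorem forward_i (hU : IsOpen U) (hgsym : ∀ x a b, g x a b = g x b a)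
    (hgsm : ∀ a b, ContDiffOn ℝ (⊤ : ℕ∞) (fun x => g x a b) U)
    (hginv : ∀ x ∈ U, ∀ a b, (∑ d, g x a d * ginv x d b) = kron a b)
    {x : Fin n → ℝ} (hx : x ∈ U) (a b c : Fin n) :
    pd (fun y => ginv y b c) a x + (∑ d, LCmk g ginv x a b d * ginv x d c)
      + (∑ d, LCmk g ginv x a c d * ginv x b d) = 0 := by
  have gsympd : ∀ f h : Fin n, pd (fun y => g y f h) = pd (fun y => g y h f) := by
    intro f h
    rw [show (fun y => g y f h) = (fun y => g y h f) from funext fun y => hgsym y f h]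
  have gis := ginv_symm hgsym hginv hx
  have q1 : ∑ d, LCmk g ginv x a b d * ginv x d c
      = (1/2) * ∑ d, ∑ e, ginv x b e * ginv x d c *
          (pd (fun y => g y e d) a x + pd (fun y => g y e a) d x
            - pd (fun y => g y a d) e x) := by
    unfold LCmk
    rw [Finset.mul_sum]
    apply Finset.sum_congr rfl; intro d _
    rw [mul_assoc, Finset.sum_mul]
    congr 1
    apply Finset.sum_congr rfl; intro e _; ring
  have q2 : ∑ d, LCmk g ginv x a c d * ginv x b d
      = (1/2) * ∑ d, ∑ e, ginv x c e * ginv x b d *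
          (pd (fun y => g y e d) a x + pd (fun y => g y e a) d x
            - pd (fun y => g y a d) e x) := by
    unfold LCmk
    rw [Finset.mul_sum]
    apply Finset.sum_congr rfl; intro d _
    rw [mul_assoc, Finset.sum_mul]
    congr 1
    apply Finset.sum_congr rfl; intro e _; ring
  have P := pd_ginv hU hgsm hginv hx a b c
  have hA1 : ∑ d, ∑ e, ginv x b e * ginv x d c * pd (fun y => g y e d) a x
      = ∑ d, ∑ e, ginv x b d * ginv x e c * pd (fun y => g y d e) a x := by
    rw [Finset.sum_comm]
  have hA2 : ∑ d, ∑ e, ginv x c e * ginv x b d * pd (fun y => g y e d) a x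
      = ∑ d, ∑ e, ginv x b d * ginv x e c * pd (fun y => g y d e) a x := by
    apply Finset.sum_congr rfl; intro d _
    apply Finset.sum_congr rfl; intro e _
    rw [gis c e, gsympd e d]; ring
  have hY1 : ∑ d, ∑ e, ginv x c e * ginv x b d * pd (fun y => g y e a) d x
      = ∑ d, ∑ e, ginv x b e * ginv x d c * pd (fun y => g y a d) e x := by
    rw [Finset.sum_comm]
    apply Finset.sum_congr rfl; intro d _
    apply Finset.sum_congr rfl; intro e _
    rw [gis c d, gsympd d a]; ring
  have hY2 : ∑ d, ∑ e, ginv x c e * ginv x b d * pd (fun y => g y a d) e x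
      = ∑ d, ∑ e, ginv x b e * ginv x d c * pd (fun y => g y e a) d x := by
    rw [Finset.sum_comm]
    apply Finset.sum_congr rfl; intro d _
    apply Finset.sum_congr rfl; intro e _
    rw [gis c d, gsympd a e]; ring
  rw [q1, q2, P]
  simp only [mul_add, mul_sub, Finset.sum_add_distrib, Finset.sum_sub_distrib]
  linear_combination (1/2) * hA1 + (1/2) * hA2 + (1/2) * hY1 - (1/2) * hY2

end algebra

section mainblock
variable {n : ℕ} {U : Set (Fin n → ℝ)} {g ginv : (Fin n → ℝ) → Fin n → Fin n → ℝ}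
  {Γ : (Fin n → ℝ) → Fin n → Fin n → Fin n → ℝ} {μ : (Fin n → ℝ) → Fin n → ℝ}

theorem forward_ii (hU : IsOpen U) (hgsym : ∀ x a b, g x a b = g x b a)
    (hgsm : ∀ a b, ContDiffOn ℝ (⊤ : ℕ∞) (fun x => g x a b) U)
    (hgpos : ∀ x ∈ U, ∀ v : Fin n → ℝ, v ≠ 0 → 0 < ∑ a, ∑ b, g x a b * v a * v b)
    (hginv : ∀ x ∈ U, ∀ a b, (∑ d, g x a d * ginv x d b) = kron a b)
    {x : Fin n → ℝ} (hx : x ∈ U) (a : Fin n) :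
    pd (fun y => Real.sqrt ((Matrix.of (g y)).det)) a x
      = (∑ b, LCmk g ginv x a b b) * Real.sqrt ((Matrix.of (g x)).det) := by
  rw [pd_sqrtdet hU hgsym hgsm hgpos hginv hx a, trace_LC hgsym hginv hx a]
  ring

theorem mu_zero_main (hU : IsOpen U) (hgsym : ∀ x a b, g x a b = g x b a)
    (hgsm : ∀ a b, ContDiffOn ℝ (⊤ : ℕ∞) (fun x => g x a b) U)
    (hgpos : ∀ x ∈ U, ∀ v : Fin n → ℝ, v ≠ 0 → 0 < ∑ a, ∑ b, g x a b * v a * v b)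
    (hginv : ∀ x ∈ U, ∀ a b, (∑ d, g x a d * ginv x d b) = kron a b)
    (hΓtf : ∀ x a b c, Γ x a b c = Γ x c b a)
    (hmu : ∀ x ∈ U, ∀ a b c,
      pd (fun y => ginv y b c) a x + (∑ d, Γ x a b d * ginv x d c)
        + (∑ d, Γ x a c d * ginv x b d) = kron a b * μ x c + kron a c * μ x b)
    (hdens : ∀ x ∈ U, ∀ a,
      pd (fun y => Real.sqrt ((Matrix.of (g y)).det)) a x
        = (∑ b, Γ x a b b) * Real.sqrt ((Matrix.of (g x)).det)) :
    ∀ x ∈ U, ∀ a, μ x a = 0 := by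
  intro x hx a
  have lo : ∀ f : Fin n, ∑ e, g x f e * μ x e = 0 := by
    intro f
    have h1 := trace_LC hgsym hginv hx f
    have h2 := pd_sqrtdet hU hgsym hgsm hgpos hginv hx f
    have h3 := hdens x hx f
    have h4 : ∀ b, LCmk g ginv x f b b = Γ x f b b - g x f b * μ x b :=
      fun b => koszul hU hgsym hgsm hginv hΓtf hmu hx f b b
    have h5 : ∑ b, LCmk g ginv x f b b
        = (∑ b, Γ x f b b) - ∑ b, g x f b * μ x b := by
      simp only [h4]; rw [Finset.sum_sub_distrib]
    have epos : 0 < Real.sqrt ((Matrix.of (g x)).det) :=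
      Real.sqrt_pos.mpr (gdet_pos hgsym hgpos hx)
    have key : (∑ b, Γ x f b b) * Real.sqrt ((Matrix.of (g x)).det)
        = ((∑ b, Γ x f b b) - ∑ b, g x f b * μ x b)
            * Real.sqrt ((Matrix.of (g x)).det) := by
      rw [← h3, h2]
      linear_combination Real.sqrt ((Matrix.of (g x)).det) * (h5 - h1)
    have := mul_right_cancel₀ epos.ne' key
    linarith
  have hc := contract_ginv_g hginv hx a (μ x)
  rw [← hc]
  simp only [lo]
  simp

end mainblock



/-- a torsion-free affine connection `Γ` equals the Levi-Civita
connection of the Riemannian metric `g` (with inverse components `ginv` and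
volume density `e = √det g`) iff (i) `∇_a g^{bc}` is of the form
`δ_a{}^b μ^c + δ_a{}^c μ^b` for some smooth vector field `μ`, and (ii) the
volume density is parallel, `∂_a e = Γ_a{}^b{}_b e`.  Moreover, in that case
necessarily `μ = 0` on `U`. -/
theorem levi_civita_characterisation
    {n : ℕ} (hn : 2 ≤ n) (U : Set (Fin n → ℝ)) (hU : IsOpen U)
    (g ginv : (Fin n → ℝ) → Fin n → Fin n → ℝ)
    (hgsym : ∀ x a b, g x a b = g x b a)
    (hgsm : ∀ a b, ContDiffOn ℝ (⊤ : ℕ∞) (fun x => g x a b) U)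
    (hgpos : ∀ x ∈ U, ∀ v : Fin n → ℝ, v ≠ 0 → 0 < ∑ a, ∑ b, g x a b * v a * v b)
    (hginv : ∀ x ∈ U, ∀ a b, (∑ d, g x a d * ginv x d b) = kron a b)
    (Γ : (Fin n → ℝ) → Fin n → Fin n → Fin n → ℝ)
    (hΓtf : ∀ x a b c, Γ x a b c = Γ x c b a)
    (hΓsm : ∀ a b c, ContDiffOn ℝ (⊤ : ℕ∞) (fun x => Γ x a b c) U) :
    ((∀ x ∈ U, ∀ a b c,
        Γ x a b c = (1/2) * ∑ d, ginv x b d *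
          (pd (fun y => g y d c) a x + pd (fun y => g y d a) c x
            - pd (fun y => g y a c) d x)) ↔
      ((∃ μ : (Fin n → ℝ) → Fin n → ℝ,
          (∀ b, ContDiffOn ℝ (⊤ : ℕ∞) (fun x => μ x b) U) ∧
          ∀ x ∈ U, ∀ a b c,
            pd (fun y => ginv y b c) a x + (∑ d, Γ x a b d * ginv x d c)
                + (∑ d, Γ x a c d * ginv x b d)
              = kron a b * μ x c + kron a c * μ x b) ∧
        (∀ x ∈ U, ∀ a,
          pd (fun y => Real.sqrt (Matrix.det (Matrix.of fun i j => g y i j))) a x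
            = (∑ b, Γ x a b b) * Real.sqrt (Matrix.det (Matrix.of fun i j => g x i j)))))
    ∧
    (∀ μ : (Fin n → ℝ) → Fin n → ℝ,
      (∀ x ∈ U, ∀ a b c,
        pd (fun y => ginv y b c) a x + (∑ d, Γ x a b d * ginv x d c)
            + (∑ d, Γ x a c d * ginv x b d)
          = kron a b * μ x c + kron a c * μ x b) →
      (∀ x ∈ U, ∀ a,
        pd (fun y => Real.sqrt (Matrix.det (Matrix.of fun i j => g y i j))) a x
          = (∑ b, Γ x a b b) * Real.sqrt (Matrix.det (Matrix.of fun i j => g x i j))) →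
      ∀ x ∈ U, ∀ a, μ x a = 0) := by
  constructor
  · constructor
    · intro hLC
      have hLC' : ∀ x ∈ U, ∀ a b c, Γ x a b c = LCmk g ginv x a b c := hLC
      constructor
      · refine ⟨fun _ _ => 0, fun b => contDiffOn_const, ?_⟩
        intro x hx a b c
        have e1 : (∑ d, Γ x a b d * ginv x d c)
            = ∑ d, LCmk g ginv x a b d * ginv x d c :=
          Finset.sum_congr rfl fun d _ => by rw [hLC' x hx a b d]
        have e2 : (∑ d, Γ x a c d * ginv x b d)
            = ∑ d, LCmk g ginv x a c d * ginv x b d :=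
          Finset.sum_congr rfl fun d _ => by rw [hLC' x hx a c d]
        rw [e1, e2, forward_i hU hgsym hgsm hginv hx a b c]
        simp
      · intro x hx a
        have e3 : (∑ b, Γ x a b b) = ∑ b, LCmk g ginv x a b b :=
          Finset.sum_congr rfl fun b _ => by rw [hLC' x hx a b b]
        rw [e3]
        exact forward_ii hU hgsym hgsm hgpos hginv hx a
    · rintro ⟨⟨μ, hμsm, hmu⟩, hdens⟩ x hx a b c
      have hz := mu_zero_main hU hgsym hgsm hgpos hginv hΓtf hmu hdens x hx b
      have hk := koszul hU hgsym hgsm hginv hΓtf hmu hx a b c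
      rw [hz, mul_zero, sub_zero] at hk
      exact hk.symm
  · intro μ hmu hdens x hx a
    exact mu_zero_main hU hgsym hgsm hgpos hginv hΓtf hmu hdens x hx a
end

section
/- Let Γ be a torsion-free affine connection on U, let f be a smooth function on U, set Υ_a = ∂_a f, and let Γ̂ be projectively equivalent to Γ via Υ. Suppose σ is a smooth field of symmetric contravariant 2-tensors satisfying the metrisability equation for Γ with vector field μ. Then σ̂ = e^{−2f} σ satisfies the metrisability equation for Γ̂ with vector field μ̂^a = e^{−2f}(μ^a + Υ_b σ^{ab}). -/
open scoped BigOperators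

/-- projective invariance of the metrisability equation.  If `σ`
solves the metrisability equation for `Γ` with vector field `μ`, and
`Γ̂ = Γ + Υδ + δΥ` with `Υ = df`, then `σ̂ = e^{-2f} σ` solves it for `Γ̂` with
vector field `μ̂^a = e^{-2f}(μ^a + Υ_b σ^{ab})`. -/
theorem metrisability_projectively_invariant
    {n : ℕ} (hn : 2 ≤ n) (U : Set (Fin n → ℝ)) (hU : IsOpen U)
    (Γ Γhat : (Fin n → ℝ) → Fin n → Fin n → Fin n → ℝ)
    (hΓtf : ∀ x a b c, Γ x a b c = Γ x c b a)
    (hΓsm : ∀ a b c, ContDiffOn ℝ (⊤ : ℕ∞) (fun x => Γ x a b c) U)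
    (f : (Fin n → ℝ) → ℝ) (hf : ContDiffOn ℝ (⊤ : ℕ∞) f U)
    (hproj : ∀ x a b c,
      Γhat x a b c = Γ x a b c + pd f a x * kron c b + kron a b * pd f c x)
    (σ : (Fin n → ℝ) → Fin n → Fin n → ℝ)
    (hσsym : ∀ x b c, σ x b c = σ x c b)
    (hσsm : ∀ b c, ContDiffOn ℝ (⊤ : ℕ∞) (fun x => σ x b c) U)
    (μ : (Fin n → ℝ) → Fin n → ℝ)
    (hμsm : ∀ a, ContDiffOn ℝ (⊤ : ℕ∞) (fun x => μ x a) U)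
    (hmetr : ∀ x ∈ U, ∀ a b c,
      nablaSig Γ σ x a b c = kron a b * μ x c + kron a c * μ x b) :
    ∀ x ∈ U, ∀ a b c,
      nablaSig Γhat (fun y b' c' => Real.exp (-2 * f y) * σ y b' c') x a b c
        = kron a b * (Real.exp (-2 * f x) * (μ x c + ∑ d, pd f d x * σ x c d))
          + kron a c * (Real.exp (-2 * f x) * (μ x b + ∑ d, pd f d x * σ x b d)) := by
  intro x hx a b c
  have hxU : U ∈ nhds x := hU.mem_nhds hx
  have hfd : DifferentiableAt ℝ f x :=
    ((hf.contDiffAt hxU).differentiableAt (by simp))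
  have hσd : ∀ b c : Fin n, DifferentiableAt ℝ (fun y => σ y b c) x := fun b c =>
    (((hσsm b c).contDiffAt hxU).differentiableAt (by simp))
  set E := Real.exp (-2 * f x) with hE
  -- derivative of the exponential factor
  have hEfd : HasFDerivAt (fun y => Real.exp (-2 * f y))
      (E • ((-2 : ℝ) • fderiv ℝ f x)) x := by
    convert (hfd.hasFDerivAt.const_mul (-2 : ℝ)).exp using 1
  -- product rule for the rescaled tensor
  have hP : ∀ b c : Fin n,
      pd (fun y => Real.exp (-2 * f y) * σ y b c) a x
        = E * (-2 * pd f a x * σ x b c + pd (fun y => σ y b c) a x) := by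
    intro b c
    have hM : HasFDerivAt (fun y => Real.exp (-2 * f y) * σ y b c) _ x := hEfd.mul (hσd b c).hasFDerivAt
    have := hM.fderiv
    simp only [pd, this]
    simp [pd, hE]
    ring
  -- sums against a Kronecker delta
  have hkron : ∀ (b : Fin n) (g : Fin n → ℝ), (∑ d, kron d b * g d) = g b := by
    intro b g
    simp [kron, Finset.sum_ite_eq]
  have key := hmetr x hx a b c
  simp only [nablaSig] at key
  simp only [nablaSig, hproj, hP]
  have expand1 : (∑ d, (Γ x a b d + pd f a x * kron d b + kron a b * pd f d x)
        * (Real.exp (-2 * f x) * σ x d c))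
      = E * ((∑ d, Γ x a b d * σ x d c) + pd f a x * σ x b c
          + kron a b * ∑ d, pd f d x * σ x d c) := by
    have h1 : ∀ d : Fin n, (Γ x a b d + pd f a x * kron d b + kron a b * pd f d x) * (E * σ x d c)
        = E * (Γ x a b d * σ x d c) + kron d b * (pd f a x * (E * σ x d c))
          + E * (kron a b * (pd f d x * σ x d c)) := fun d => by ring
    rw [Finset.sum_congr rfl (fun d _ => h1 d), Finset.sum_add_distrib, Finset.sum_add_distrib,
      hkron b (fun d => pd f a x * (E * σ x d c))]
    simp only [← Finset.mul_sum]
    ring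
  have expand2 : (∑ d, (Γ x a c d + pd f a x * kron d c + kron a c * pd f d x)
        * (Real.exp (-2 * f x) * σ x b d))
      = E * ((∑ d, Γ x a c d * σ x b d) + pd f a x * σ x b c
          + kron a c * ∑ d, pd f d x * σ x b d) := by
    have h1 : ∀ d : Fin n, (Γ x a c d + pd f a x * kron d c + kron a c * pd f d x) * (E * σ x b d)
        = E * (Γ x a c d * σ x b d) + kron d c * (pd f a x * (E * σ x b d))
          + E * (kron a c * (pd f d x * σ x b d)) := fun d => by ring
    rw [Finset.sum_congr rfl (fun d _ => h1 d), Finset.sum_add_distrib, Finset.sum_add_distrib,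
      hkron c (fun d => pd f a x * (E * σ x b d)), hσsym x b c]
    simp only [← Finset.mul_sum]
    rw [hσsym x c b]
    ring
  rw [expand1, expand2]
  have hswap : ∀ (b : Fin n), (∑ d, pd f d x * σ x b d) = ∑ d, pd f d x * σ x d b := by
    intro b; apply Finset.sum_congr rfl; intro d _; rw [hσsym x b d]
  calc E * (-2 * pd f a x * σ x b c + pd (fun y => σ y b c) a x)
        + E * ((∑ d, Γ x a b d * σ x d c) + pd f a x * σ x b c
            + kron a b * ∑ d, pd f d x * σ x d c)
        + E * ((∑ d, Γ x a c d * σ x b d) + pd f a x * σ x b c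
            + kron a c * ∑ d, pd f d x * σ x b d)
      = E * ((pd (fun y => σ y b c) a x + ∑ d, Γ x a b d * σ x d c
              + ∑ d, Γ x a c d * σ x b d)
            + kron a b * (∑ d, pd f d x * σ x d c)
            + kron a c * (∑ d, pd f d x * σ x b d)) := by ring
    _ = E * ((kron a b * μ x c + kron a c * μ x b)
            + kron a b * (∑ d, pd f d x * σ x d c)
            + kron a c * (∑ d, pd f d x * σ x b d)) := by rw [key]
    _ = kron a b * (E * (μ x c + ∑ d, pd f d x * σ x c d))
          + kron a c * (E * (μ x b + ∑ d, pd f d x * σ x b d)) := by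
        rw [hswap c]; ring
end

section
/- Let Γ be a special torsion-free affine connection on U with parallel volume density e. Then the assignments σ ↦ g, where g is the Riemannian metric with inverse components g^{ab} = (e² det(σ^{cd})) σ^{ab}, and g ↦ σ, where σ^{ab} = (e² det(g^{cd}))^{−1/(n+1)} g^{ab}, are mutually inverse bijections between the set of smooth positive-definite solutions σ of the metrisability equation for Γ and the set of smooth Riemannian metrics g on U whose Levi-Civita connection is projectively equivalent to Γ via an exact 1-form Υ = df. -/
open scoped BigOperators

/-- `σ` is a smooth positive-definite solution of the metrisability equation for `Γ` on `U`. -/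
def IsMetrisabilitySolution {n : ℕ} (U : Set (Fin n → ℝ))
    (Γ : (Fin n → ℝ) → Fin n → Fin n → Fin n → ℝ)
    (σ : (Fin n → ℝ) → Fin n → Fin n → ℝ) : Prop :=
  (∀ b c, ContDiffOn ℝ (⊤ : ℕ∞) (fun x => σ x b c) U) ∧
  (∀ x b c, σ x b c = σ x c b) ∧
  (∀ x ∈ U, ∀ v : Fin n → ℝ, v ≠ 0 → 0 < ∑ a, ∑ b, σ x a b * v a * v b) ∧
  (∃ μ : (Fin n → ℝ) → Fin n → ℝ,
    (∀ a, ContDiffOn ℝ (⊤ : ℕ∞) (fun x => μ x a) U) ∧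
    ∀ x ∈ U, ∀ a b c, nablaSig Γ σ x a b c = kron a b * μ x c + kron a c * μ x b)

/-- `g` is a smooth Riemannian metric on `U` whose Levi-Civita connection is
projectively equivalent to `Γ` via an exact 1-form `Υ = df`. -/
def IsProjectivelyCompatibleMetric {n : ℕ} (U : Set (Fin n → ℝ))
    (Γ : (Fin n → ℝ) → Fin n → Fin n → Fin n → ℝ)
    (g : (Fin n → ℝ) → Fin n → Fin n → ℝ) : Prop :=
  (∀ a b, ContDiffOn ℝ (⊤ : ℕ∞) (fun x => g x a b) U) ∧
  (∀ x a b, g x a b = g x b a) ∧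
  (∀ x ∈ U, ∀ v : Fin n → ℝ, v ≠ 0 → 0 < ∑ a, ∑ b, g x a b * v a * v b) ∧
  (∃ f : (Fin n → ℝ) → ℝ, ContDiffOn ℝ (⊤ : ℕ∞) f U ∧
    ∀ x ∈ U, ∀ a b c,
      (1/2) * (∑ d, ((Matrix.of fun i j => g x i j)⁻¹ b d) *
        (pd (fun y => g y d c) a x + pd (fun y => g y d a) c x
          - pd (fun y => g y a c) d x))
        = Γ x a b c + pd f a x * kron c b + kron a b * pd f c x)

/-- The metric associated to a metrisability solution: `g_{ab}` is the inverse
matrix of `g^{ab} = (e² det σ) σ^{ab}`. -/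
noncomputable def sigmaToMetric {n : ℕ} (e : (Fin n → ℝ) → ℝ)
    (σ : (Fin n → ℝ) → Fin n → Fin n → ℝ) :
    (Fin n → ℝ) → Fin n → Fin n → ℝ :=
  fun x a b =>
    (Matrix.of fun i j =>
      (e x ^ 2 * (Matrix.of fun k l => σ x k l).det) * σ x i j)⁻¹ a b

/-- The metrisability solution associated to a metric:
`σ^{ab} = (e² det g^{cd})^{-1/(n+1)} g^{ab}`. -/
noncomputable def metricToSigma (n : ℕ) (e : (Fin n → ℝ) → ℝ)
    (g : (Fin n → ℝ) → Fin n → Fin n → ℝ) :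
    (Fin n → ℝ) → Fin n → Fin n → ℝ :=
  fun x a b =>
    Real.rpow (e x ^ 2 * ((Matrix.of fun i j => g x i j)⁻¹).det)
        (-(1 : ℝ) / ((n : ℝ) + 1))
      * ((Matrix.of fun i j => g x i j)⁻¹ a b)


namespace MetAux
open Matrix

variable {n : ℕ}

lemma kron_symm (a b : Fin n) : kron a b = kron b a := by
  simp only [kron]; by_cases h : a = b <;> simp [h, Ne.symm, eq_comm]

lemma sum_mul_kron (X : Fin n → ℝ) (p : Fin n) : ∑ d, X d * kron d p = X p := by
  simp [kron, mul_ite, Finset.sum_ite_eq']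

lemma sum_kron_mul (X : Fin n → ℝ) (p : Fin n) : ∑ d, kron d p * X d = X p := by
  simp [kron, ite_mul, Finset.sum_ite_eq']

lemma sum_kron_mul' (X : Fin n → ℝ) (p : Fin n) : ∑ d, kron p d * X d = X p := by
  simp [kron, ite_mul, Finset.sum_ite_eq]

lemma sum_mul_kron' (X : Fin n → ℝ) (p : Fin n) : ∑ d, X d * kron p d = X p := by
  simp [kron, mul_ite, Finset.sum_ite_eq]

lemma pd_of_hasFDerivAt {F : (Fin n → ℝ) → ℝ} {L : (Fin n → ℝ) →L[ℝ] ℝ} {x} (h : HasFDerivAt F L x) (a : Fin n) :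
    pd F a x = L (Pi.single a 1) := by rw [pd, h.fderiv]

lemma pd_congr_nhds {F G : (Fin n → ℝ) → ℝ} {x} (h : F =ᶠ[nhds x] G) (a : Fin n) :
    pd F a x = pd G a x := by rw [pd, pd, h.fderiv_eq]

lemma pd_congr_on {U : Set (Fin n → ℝ)} (hU : IsOpen U) {F G : (Fin n → ℝ) → ℝ} {x}
    (hx : x ∈ U) (h : ∀ y ∈ U, F y = G y) (a : Fin n) : pd F a x = pd G a x :=
  pd_congr_nhds (Filter.eventuallyEq_of_mem (hU.mem_nhds hx) h) a

lemma pd_const (c : ℝ) (a : Fin n) (x) : pd (fun _ => c) a x = 0 := by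
  simp [pd, fderiv_const]

variable {f g : (Fin n → ℝ) → ℝ} {x : Fin n → ℝ} {a : Fin n}

lemma pd_add (hf : DifferentiableAt ℝ f x) (hg : DifferentiableAt ℝ g x) :
    pd (fun y => f y + g y) a x = pd f a x + pd g a x := by
  simp [pd, fderiv_fun_add hf hg]

lemma pd_sub (hf : DifferentiableAt ℝ f x) (hg : DifferentiableAt ℝ g x) :
    pd (fun y => f y - g y) a x = pd f a x - pd g a x := by
  simp [pd, fderiv_fun_sub hf hg]

lemma pd_mul (hf : DifferentiableAt ℝ f x) (hg : DifferentiableAt ℝ g x) :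
    pd (fun y => f y * g y) a x = pd f a x * g x + f x * pd g a x := by
  simp only [pd, fderiv_fun_mul hf hg]
  simp only [ContinuousLinearMap.add_apply, ContinuousLinearMap.smul_apply, smul_eq_mul]
  ring

lemma pd_const_mul (c : ℝ) (hg : DifferentiableAt ℝ g x) :
    pd (fun y => c * g y) a x = c * pd g a x := by
  simp [pd, fderiv_const_mul hg]

lemma pd_neg (hg : DifferentiableAt ℝ g x) :
    pd (fun y => -(g y)) a x = -pd g a x := by
  simpa using pd_const_mul (-1) hg

lemma pd_sum {ι : Type*} (s : Finset ι) (F : ι → (Fin n → ℝ) → ℝ)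
    (h : ∀ i ∈ s, DifferentiableAt ℝ (F i) x) :
    pd (fun y => ∑ i ∈ s, F i y) a x = ∑ i ∈ s, pd (F i) a x := by
  classical
  induction s using Finset.induction with
  | empty => simp [pd_const]
  | insert j s' hni ih =>
    have h1 : DifferentiableAt ℝ (F j) x := h j (Finset.mem_insert_self _ _)
    have h2 : DifferentiableAt ℝ (fun y => ∑ i ∈ s', F i y) x :=
      DifferentiableAt.fun_sum fun i hi => h i (Finset.mem_insert_of_mem hi)
    have key : pd (fun y => ∑ i ∈ insert j s', F i y) a x
        = pd (fun y => F j y + ∑ i ∈ s', F i y) a x := by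
      congr 1; funext y; exact Finset.sum_insert hni
    rw [key, pd_add h1 h2, ih fun i hi => h i (Finset.mem_insert_of_mem hi),
      Finset.sum_insert hni]

lemma pd_prod {ι : Type*} [DecidableEq ι] (s : Finset ι) (F : ι → (Fin n → ℝ) → ℝ)
    (h : ∀ i ∈ s, DifferentiableAt ℝ (F i) x) :
    pd (fun y => ∏ i ∈ s, F i y) a x
      = ∑ i ∈ s, (∏ j ∈ s.erase i, F j x) * pd (F i) a x := by
  have hH : HasFDerivAt (∏ i ∈ s, F i ·)
      (∑ i ∈ s, (∏ j ∈ s.erase i, F j x) • fderiv ℝ (F i) x) x :=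
    HasFDerivAt.finset_prod (fun i hi => (h i hi).hasFDerivAt)
  have h2 := pd_of_hasFDerivAt hH a
  simp only [ContinuousLinearMap.sum_apply, ContinuousLinearMap.smul_apply, smul_eq_mul] at h2
  rw [show (fun y => ∏ i ∈ s, F i y) = (∏ i ∈ s, F i ·) from rfl]
  rw [h2]
  rfl

lemma pd_comp_hasDerivAt {h : ℝ → ℝ} {d : ℝ} (hd : HasDerivAt h d (f x))
    (hf : DifferentiableAt ℝ f x) :
    pd (fun y => h (f y)) a x = d * pd f a x := by
  have := hd.comp_hasFDerivAt x hf.hasFDerivAt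
  have h2 := pd_of_hasFDerivAt this a
  simp only [ContinuousLinearMap.smul_apply, smul_eq_mul] at h2
  rw [show (fun y => h (f y)) = h ∘ f from rfl, h2]
  rfl

lemma diffAt_of_contDiffOn {U : Set (Fin n → ℝ)} (hU : IsOpen U)
    (h : ContDiffOn ℝ (⊤ : ℕ∞) f U) (hx : x ∈ U) : DifferentiableAt ℝ f x :=
  (h.contDiffAt (hU.mem_nhds hx)).differentiableAt (by simp)


open Matrix
variable {n : ℕ} {x : Fin n → ℝ}

/-- `det (A.updateCol i b) = ∑ p, b p * adjugate A i p`. -/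
lemma det_updateCol_eq (A : Matrix (Fin n) (Fin n) ℝ) (i : Fin n) (b : Fin n → ℝ) :
    (A.updateCol i b).det = ∑ p, b p * A.adjugate i p := by
  rw [← Matrix.cramer_apply]
  have hb : b = ∑ p, Pi.single p (b p) := (Finset.univ_sum_single b).symm
  conv_lhs => rw [hb]
  rw [map_sum, Finset.sum_apply]
  refine Finset.sum_congr rfl fun p _ => ?_
  have h1 : Pi.single p (b p) = b p • (Pi.single p 1 : Fin n → ℝ) := by
    rw [← Pi.single_smul', smul_eq_mul, mul_one]
  rw [h1, LinearMap.map_smul]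
  have h2 : A.cramer (Pi.single p 1) i = A.adjugate i p := by
    have h3 : A.adjugate i p = (Matrix.adjugate Aᵀ)ᵀ i p := by
      rw [← Matrix.adjugate_transpose A, Matrix.transpose_transpose]
    rw [h3, Matrix.transpose_apply, Matrix.adjugate_def]
    simp only [Matrix.of_apply, Matrix.transpose_transpose]
  rw [Pi.smul_apply, h2, smul_eq_mul]

/-- Jacobi's formula for `pd` of a determinant. -/
lemma pd_det {M : (Fin n → ℝ) → Matrix (Fin n) (Fin n) ℝ}
    (h : ∀ i j, DifferentiableAt ℝ (fun y => M y i j) x) (a : Fin n) :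
    pd (fun y => (M y).det) a x
      = ∑ p, ∑ q, (M x).adjugate q p * pd (fun y => M y p q) a x := by
  classical
  have hrw : (fun y => (M y).det)
      = fun y => ∑ σ : Equiv.Perm (Fin n), ((Equiv.Perm.sign σ : ℤ) : ℝ) * ∏ i, M y (σ i) i := by
    funext y; rw [Matrix.det_apply']
  have hdiffprod : ∀ σ : Equiv.Perm (Fin n),
      DifferentiableAt ℝ (fun y => ∏ i, M y (σ i) i) x := fun σ =>
    (HasFDerivAt.finset_prod (u := Finset.univ)
      (g := fun i y => M y (σ i) i) (g' := fun i => fderiv ℝ (fun y => M y (σ i) i) x) (x := x)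
      (fun i _ => (h (σ i) i).hasFDerivAt)).differentiableAt
  rw [hrw, pd_sum _ _ (fun σ _ => (differentiableAt_const _).fun_mul (hdiffprod σ))]
  have hterm : ∀ σ : Equiv.Perm (Fin n),
      pd (fun y => ((Equiv.Perm.sign σ : ℤ) : ℝ) * ∏ i, M y (σ i) i) a x
        = ∑ i, ((Equiv.Perm.sign σ : ℤ) : ℝ) *
          ((∏ j ∈ Finset.univ.erase i, M x (σ j) j) * pd (fun y => M y (σ i) i) a x) := by
    intro σ
    rw [pd_const_mul _ (hdiffprod σ), pd_prod _ _ (fun i _ => h (σ i) i), Finset.mul_sum]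
  simp only [hterm]
  rw [Finset.sum_comm]
  have hcol : ∀ i : Fin n,
      (∑ σ : Equiv.Perm (Fin n), ((Equiv.Perm.sign σ : ℤ) : ℝ) *
        ((∏ j ∈ Finset.univ.erase i, M x (σ j) j) * pd (fun y => M y (σ i) i) a x))
      = ((M x).updateCol i (fun p => pd (fun y => M y p i) a x)).det := by
    intro i
    rw [Matrix.det_apply']
    refine Finset.sum_congr rfl fun σ _ => ?_
    congr 1
    have hsplit : (∏ j, ((M x).updateCol i (fun p => pd (fun y => M y p i) a x)) (σ j) j)
        = ((M x).updateCol i (fun p => pd (fun y => M y p i) a x)) (σ i) i *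
          ∏ j ∈ Finset.univ.erase i,
            ((M x).updateCol i (fun p => pd (fun y => M y p i) a x)) (σ j) j :=
      (Finset.mul_prod_erase Finset.univ _ (Finset.mem_univ i)).symm
    rw [hsplit, Matrix.updateCol_self]
    rw [mul_comm]
    congr 1
    refine Finset.prod_congr rfl fun j hj => ?_
    rw [Matrix.updateCol_ne (Finset.ne_of_mem_erase hj)]
  simp only [hcol]
  have hfin : ∀ i : Fin n,
      ((M x).updateCol i (fun p => pd (fun y => M y p i) a x)).det
        = ∑ p, (M x).adjugate i p * pd (fun y => M y p i) a x := by
    intro i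
    rw [det_updateCol_eq]
    exact Finset.sum_congr rfl fun p _ => mul_comm _ _
  simp only [hfin]
  rw [Finset.sum_comm]


open Matrix
variable {n : ℕ} {U : Set (Fin n → ℝ)} {x : Fin n → ℝ} {a : Fin n}

lemma contDiffOn_det' {M : (Fin n → ℝ) → Matrix (Fin n) (Fin n) ℝ}
    (h : ∀ i j, ContDiffOn ℝ (⊤ : ℕ∞) (fun y => M y i j) U) :
    ContDiffOn ℝ (⊤ : ℕ∞) (fun y => (M y).det) U := by
  have hrw : (fun y => (M y).det)
      = fun y => ∑ σ : Equiv.Perm (Fin n), ((Equiv.Perm.sign σ : ℤ) : ℝ) * ∏ i, M y (σ i) i := by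
    funext y; rw [Matrix.det_apply']
  rw [hrw]
  refine ContDiffOn.sum fun σ _ => ContDiffOn.mul contDiffOn_const ?_
  intro y hy
  exact contDiffWithinAt_prod fun i _ => (h (σ i) i) y hy

lemma contDiffOn_adjugate {M : (Fin n → ℝ) → Matrix (Fin n) (Fin n) ℝ}
    (h : ∀ i j, ContDiffOn ℝ (⊤ : ℕ∞) (fun y => M y i j) U) (i j : Fin n) :
    ContDiffOn ℝ (⊤ : ℕ∞) (fun y => (M y).adjugate i j) U := by
  have hrw : (fun y => (M y).adjugate i j)
      = fun y => ((M y).updateRow j (Pi.single i 1)).det := by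
    funext y; rw [Matrix.adjugate_apply]
  rw [hrw]
  refine contDiffOn_det' fun p q => ?_
  by_cases hp : p = j
  · subst hp
    have : (fun y => ((M y).updateRow p (Pi.single i 1)) p q)
        = fun _ => (Pi.single i 1 : Fin n → ℝ) q := by
      funext y; rw [Matrix.updateRow_self]
    rw [this]; exact contDiffOn_const
  · have : (fun y => ((M y).updateRow j (Pi.single i 1)) p q) = fun y => M y p q := by
      funext y; rw [Matrix.updateRow_ne hp]
    rw [this]; exact h p q

lemma inv_entry_eq {A : Matrix (Fin n) (Fin n) ℝ} (i j : Fin n) :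
    A⁻¹ i j = (A.det)⁻¹ * A.adjugate i j := by
  rw [Matrix.inv_def, Matrix.smul_apply, Ring.inverse_eq_inv', smul_eq_mul]

lemma contDiffOn_inv_entry {M : (Fin n → ℝ) → Matrix (Fin n) (Fin n) ℝ}
    (h : ∀ i j, ContDiffOn ℝ (⊤ : ℕ∞) (fun y => M y i j) U)
    (hdet : ∀ y ∈ U, (M y).det ≠ 0) (i j : Fin n) :
    ContDiffOn ℝ (⊤ : ℕ∞) (fun y => (M y)⁻¹ i j) U := by
  have hrw : (fun y => (M y)⁻¹ i j) = fun y => ((M y).det)⁻¹ * (M y).adjugate i j := by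
    funext y; exact inv_entry_eq i j
  rw [hrw]
  exact ((contDiffOn_det' h).inv hdet).mul (contDiffOn_adjugate h i j)

lemma posDef_of {M : Matrix (Fin n) (Fin n) ℝ} (hsym : ∀ a b, M a b = M b a)
    (hq : ∀ v : Fin n → ℝ, v ≠ 0 → 0 < ∑ a, ∑ b, M a b * v a * v b) : M.PosDef := by
  rw [Matrix.posDef_iff_dotProduct_mulVec]
  constructor
  · ext i j
    simp only [Matrix.conjTranspose_apply, star_trivial]
    exact hsym j i
  · intro v hv
    have h1 := hq v hv
    have h2 : (star v) ⬝ᵥ (M *ᵥ v) = ∑ a, ∑ b, M a b * v a * v b := by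
      simp only [dotProduct, Matrix.mulVec, star_trivial, dotProduct, Finset.mul_sum]
      refine Finset.sum_congr rfl fun p _ => Finset.sum_congr rfl fun q _ => by ring
    rw [h2]
    exact h1

lemma quad_of_posDef {M : Matrix (Fin n) (Fin n) ℝ} (hM : M.PosDef) :
    ∀ v : Fin n → ℝ, v ≠ 0 → 0 < ∑ a, ∑ b, M a b * v a * v b := by
  intro v hv
  have h1 := hM.dotProduct_mulVec_pos hv
  have h2 : (star v) ⬝ᵥ (M *ᵥ v) = ∑ a, ∑ b, M a b * v a * v b := by
    simp only [dotProduct, Matrix.mulVec, star_trivial, dotProduct, Finset.mul_sum]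
    refine Finset.sum_congr rfl fun p _ => Finset.sum_congr rfl fun q _ => by ring
  rw [h2] at h1
  exact h1

lemma inv_contract_left {A : Matrix (Fin n) (Fin n) ℝ} (h : IsUnit A.det) (p q : Fin n) :
    ∑ c, A p c * A⁻¹ c q = kron p q := by
  have h2 : (A * A⁻¹) p q = (1 : Matrix (Fin n) (Fin n) ℝ) p q := by
    rw [Matrix.mul_nonsing_inv A h]
  simpa [Matrix.mul_apply, Matrix.one_apply, kron] using h2

lemma inv_contract_right {A : Matrix (Fin n) (Fin n) ℝ} (h : IsUnit A.det) (p q : Fin n) :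
    ∑ c, A⁻¹ p c * A c q = kron p q := by
  have h2 : (A⁻¹ * A) p q = (1 : Matrix (Fin n) (Fin n) ℝ) p q := by
    rw [Matrix.nonsing_inv_mul A h]
  simpa [Matrix.mul_apply, Matrix.one_apply, kron] using h2

/-- derivative of the entries of the inverse matrix field -/
lemma pd_inv_entry (hU : IsOpen U) {M : (Fin n → ℝ) → Matrix (Fin n) (Fin n) ℝ}
    (hsm : ∀ i j, ContDiffOn ℝ (⊤ : ℕ∞) (fun y => M y i j) U)
    (hdet : ∀ y ∈ U, (M y).det ≠ 0) (hx : x ∈ U) (e q : Fin n) :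
    pd (fun y => (M y)⁻¹ e q) a x
      = -∑ d, ∑ c, (M x)⁻¹ e d * pd (fun y => M y d c) a x * (M x)⁻¹ c q := by
  have hGsm : ∀ i j, ContDiffOn ℝ (⊤ : ℕ∞) (fun y => (M y)⁻¹ i j) U :=
    contDiffOn_inv_entry hsm hdet
  have hGd : ∀ i j, DifferentiableAt ℝ (fun y => (M y)⁻¹ i j) x := fun i j =>
    diffAt_of_contDiffOn hU (hGsm i j) hx
  have hMd : ∀ i j, DifferentiableAt ℝ (fun y => M y i j) x := fun i j =>
    diffAt_of_contDiffOn hU (hsm i j) hx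
  -- E1: for each c, ∑_d pd(G e d) * A x d c = -∑_d G x e d * pd(A d c)
  have E1 : ∀ c, ∑ d, pd (fun y => (M y)⁻¹ e d) a x * M x d c
      = -∑ d, (M x)⁻¹ e d * pd (fun y => M y d c) a x := by
    intro c
    have hzero : pd (fun y => ∑ d, (M y)⁻¹ e d * M y d c) a x = 0 := by
      rw [pd_congr_on hU hx (G := fun _ => kron e c)
        (fun y hy => inv_contract_right ((hdet y hy).isUnit) e c) a]
      exact pd_const _ _ _
    rw [pd_sum _ _ (fun d _ => ((hGd e d).fun_mul (hMd d c)))] at hzero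
    have hsplit : ∀ d : Fin n, d ∈ (Finset.univ : Finset (Fin n)) →
        pd (fun y => (M y)⁻¹ e d * M y d c) a x
        = pd (fun y => (M y)⁻¹ e d) a x * M x d c
          + (M x)⁻¹ e d * pd (fun y => M y d c) a x := fun d _ =>
      pd_mul (hGd e d) (hMd d c)
    rw [Finset.sum_congr rfl hsplit, Finset.sum_add_distrib] at hzero
    linarith [hzero]
  -- contract with inverse on the right
  have key : pd (fun y => (M y)⁻¹ e q) a x
      = ∑ c, (∑ d, pd (fun y => (M y)⁻¹ e d) a x * M x d c) * (M x)⁻¹ c q := by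
    have : ∀ c ∈ (Finset.univ : Finset (Fin n)),
        (∑ d, pd (fun y => (M y)⁻¹ e d) a x * M x d c) * (M x)⁻¹ c q
        = ∑ d, pd (fun y => (M y)⁻¹ e d) a x * (M x d c * (M x)⁻¹ c q) := by
      intro c _
      rw [Finset.sum_mul]
      exact Finset.sum_congr rfl fun d _ => by ring
    rw [Finset.sum_congr rfl this, Finset.sum_comm]
    have : ∀ d ∈ (Finset.univ : Finset (Fin n)),
        (∑ c, pd (fun y => (M y)⁻¹ e d) a x * (M x d c * (M x)⁻¹ c q))
        = pd (fun y => (M y)⁻¹ e d) a x * kron d q := by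
      intro d _
      rw [← Finset.mul_sum, inv_contract_left ((hdet x hx).isUnit) d q]
    rw [Finset.sum_congr rfl this]
    simp [kron, mul_ite, Finset.sum_ite_eq']
  rw [key, Finset.sum_congr rfl (fun c (_ : c ∈ Finset.univ) => by rw [E1 c])]
  have hstep : ∀ c ∈ (Finset.univ : Finset (Fin n)),
      (-∑ d, (M x)⁻¹ e d * pd (fun y => M y d c) a x) * (M x)⁻¹ c q
      = ∑ d, -((M x)⁻¹ e d * pd (fun y => M y d c) a x * (M x)⁻¹ c q) := by
    intro c _
    rw [neg_mul, Finset.sum_mul, ← Finset.sum_neg_distrib]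
  rw [Finset.sum_congr rfl hstep, Finset.sum_comm]
  simp only [Finset.sum_neg_distrib]

open Matrix
variable {n : ℕ}

/-- From `∇̂ G = 0` (with `Γ̂` symmetric) derive the Levi-Civita formula. -/
lemma LC_formula (Am Gm : Matrix (Fin n) (Fin n) ℝ) (Γh : Fin n → Fin n → Fin n → ℝ)
    (pdG : Fin n → Fin n → Fin n → ℝ)
    (hGsym : ∀ p q, Gm p q = Gm q p)
    (hAG : ∀ p q, ∑ c, Am p c * Gm c q = kron p q)
    (hΓsym : ∀ a b c, Γh a b c = Γh c b a)
    (hpdG : ∀ a e c, pdG a e c = ∑ b, Gm e b * Γh a b c + ∑ b, Γh a b e * Gm b c)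
    (a b c : Fin n) :
    (1/2) * ∑ d, Am b d * (pdG a d c + pdG c d a - pdG d a c) = Γh a b c := by
  have key : ∀ d, pdG a d c + pdG c d a - pdG d a c = 2 * ∑ p, Gm d p * Γh a p c := by
    intro d
    rw [hpdG a d c, hpdG c d a, hpdG d a c]
    have e3 : ∑ p, Gm d p * Γh c p a = ∑ p, Gm d p * Γh a p c :=
      Finset.sum_congr rfl fun p _ => by rw [hΓsym c p a]
    have e4 : ∑ p, Γh c p d * Gm p a = ∑ p, Gm a p * Γh d p c :=
      Finset.sum_congr rfl fun p _ => by rw [hΓsym c p d, hGsym p a]; ring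
    have e6 : ∑ p, Γh d p a * Gm p c = ∑ p, Γh a p d * Gm p c :=
      Finset.sum_congr rfl fun p _ => by rw [hΓsym d p a]
    rw [e3, e4, e6]
    ring
  calc (1/2) * ∑ d, Am b d * (pdG a d c + pdG c d a - pdG d a c)
      = (1/2) * ∑ d, Am b d * (2 * ∑ p, Gm d p * Γh a p c) := by
        rw [Finset.sum_congr rfl fun d _ => by rw [key d]]
    _ = ∑ d, ∑ p, Am b d * Gm d p * Γh a p c := by
        rw [Finset.mul_sum]
        refine Finset.sum_congr rfl fun d _ => ?_
        rw [Finset.mul_sum, Finset.mul_sum, Finset.mul_sum]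
        refine Finset.sum_congr rfl fun p _ => by ring
    _ = ∑ p, (∑ d, Am b d * Gm d p) * Γh a p c := by
        rw [Finset.sum_comm]
        exact Finset.sum_congr rfl fun p _ => (Finset.sum_mul _ _ _).symm
    _ = ∑ p, kron b p * Γh a p c :=
        Finset.sum_congr rfl fun p _ => by rw [hAG b p]
    _ = Γh a b c := sum_kron_mul' _ _

/-- Converse: the Levi-Civita formula implies `∇̂ G = 0`. -/
lemma parallel_of_LC (Am Gm : Matrix (Fin n) (Fin n) ℝ) (Γh : Fin n → Fin n → Fin n → ℝ)
    (pdG : Fin n → Fin n → Fin n → ℝ)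
    (hGsym : ∀ p q, Gm p q = Gm q p)
    (hGA : ∀ p q, ∑ c, Gm p c * Am c q = kron p q)
    (hpdGsym : ∀ a d c, pdG a d c = pdG a c d)
    (hLC : ∀ a b c, (1/2) * ∑ d, Am b d * (pdG a d c + pdG c d a - pdG d a c) = Γh a b c)
    (a e c : Fin n) :
    pdG a e c = ∑ b, Gm e b * Γh a b c + ∑ b, Γh a b e * Gm b c := by
  have E : ∀ a' e' c', ∑ b, Gm e' b * Γh a' b c'
      = (1/2) * (pdG a' e' c' + pdG c' e' a' - pdG e' a' c') := by
    intro a' e' c'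
    have h1 : ∑ b, Gm e' b * Γh a' b c'
        = ∑ b, Gm e' b * ((1/2) * ∑ d, Am b d * (pdG a' d c' + pdG c' d a' - pdG d a' c')) :=
      Finset.sum_congr rfl fun b _ => by rw [hLC a' b c']
    rw [h1]
    have h2 : ∀ b : Fin n, Gm e' b * ((1/2) * ∑ d, Am b d * (pdG a' d c' + pdG c' d a' - pdG d a' c'))
        = ∑ d, ((1/2) * (Gm e' b * Am b d)) * (pdG a' d c' + pdG c' d a' - pdG d a' c') := by
      intro b
      rw [Finset.mul_sum, Finset.mul_sum]
      exact Finset.sum_congr rfl fun d _ => by ring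
    rw [Finset.sum_congr rfl fun b _ => h2 b, Finset.sum_comm]
    have h3 : ∀ d : Fin n,
        ∑ b, ((1/2) * (Gm e' b * Am b d)) * (pdG a' d c' + pdG c' d a' - pdG d a' c')
        = kron e' d * ((1/2) * (pdG a' d c' + pdG c' d a' - pdG d a' c')) := by
      intro d
      rw [← Finset.sum_mul]
      have : ∑ b, (1/2) * (Gm e' b * Am b d) = (1/2) * ∑ b, Gm e' b * Am b d :=
        (Finset.mul_sum _ _ _).symm
      rw [this, hGA e' d]
      ring
    rw [Finset.sum_congr rfl fun d _ => h3 d, sum_kron_mul' _ e']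
  have hsecond : ∑ b, Γh a b e * Gm b c
      = (1/2) * (pdG a c e + pdG e c a - pdG c a e) := by
    have : ∑ b, Γh a b e * Gm b c = ∑ b, Gm c b * Γh a b e :=
      Finset.sum_congr rfl fun b _ => by rw [hGsym b c]; ring
    rw [this, E a c e]
  rw [E a e c, hsecond]
  rw [hpdGsym a c e, hpdGsym e c a, hpdGsym c a e]
  ring

/-- matrix form of pointwise contraction hypotheses -/
lemma mul_eq_one_of_contract {Am Gm : Matrix (Fin n) (Fin n) ℝ}
    (hAG : ∀ p q, ∑ c, Am p c * Gm c q = kron p q) : Am * Gm = 1 := by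
  ext p q
  rw [Matrix.mul_apply, hAG p q, Matrix.one_apply]
  rfl

/-- Conjugating a parallelism statement by the inverse matrix, direction 1:
from `∇̂ A = 0` (A contravariant) deduce `∇̂ G = 0` (G covariant). -/
lemma parallel_conj (Am Gm : Matrix (Fin n) (Fin n) ℝ) (Γh : Fin n → Fin n → ℝ)
    (pdA pdG : Fin n → Fin n → ℝ)
    (hAG : ∀ p q, ∑ c, Am p c * Gm c q = kron p q)
    (hGA : ∀ p q, ∑ c, Gm p c * Am c q = kron p q)
    (hpdA : ∀ p q, pdA p q = -∑ d, Γh p d * Am d q - ∑ d, Γh q d * Am p d)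
    (hrel : ∀ e q, pdG e q = -∑ d, ∑ c, Gm e d * pdA d c * Gm c q)
    (e q : Fin n) :
    pdG e q = ∑ b, Gm e b * Γh b q + ∑ b, Γh b e * Gm b q := by
  have hAG' : Am * Gm = 1 := mul_eq_one_of_contract hAG
  have hGA' : Gm * Am = 1 := mul_eq_one_of_contract hGA
  set C : Matrix (Fin n) (Fin n) ℝ := Matrix.of Γh with hC
  have hpdA' : (Matrix.of pdA) = -(C * Am) - Am * Cᵀ := by
    ext p q
    rw [Matrix.of_apply, hpdA p q]
    simp only [Matrix.sub_apply, Matrix.neg_apply, Matrix.mul_apply, Matrix.transpose_apply, hC,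
      Matrix.of_apply]
    congr 1
    exact Finset.sum_congr rfl fun d _ => by ring
  have hrel' : (Matrix.of pdG) = -(Gm * (Matrix.of pdA) * Gm) := by
    ext e' q'
    rw [Matrix.of_apply, hrel e' q']
    rw [Matrix.neg_apply, Matrix.mul_apply]
    rw [neg_inj, Finset.sum_comm]
    refine Finset.sum_congr rfl fun c _ => ?_
    rw [Matrix.mul_apply, Finset.sum_mul]
    exact Finset.sum_congr rfl fun d _ => by rw [Matrix.of_apply]
  have key : (Matrix.of pdG) = Gm * C + Cᵀ * Gm := by
    rw [hrel', hpdA']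
    have expand : -(Gm * (-(C * Am) - Am * Cᵀ) * Gm)
        = Gm * C * (Am * Gm) + Gm * Am * (Cᵀ * Gm) := by noncomm_ring
    rw [expand, hAG', hGA', Matrix.mul_one, Matrix.one_mul]
  have hk := congrFun (congrFun key e) q
  simp only [Matrix.of_apply] at hk
  rw [hk]
  simp only [Matrix.add_apply, Matrix.mul_apply, Matrix.transpose_apply, hC, Matrix.of_apply]

/-- direction 2: from `∇̂ G = 0` deduce `∇̂ A = 0`. -/
lemma parallel_conj' (Am Gm : Matrix (Fin n) (Fin n) ℝ) (Γh : Fin n → Fin n → ℝ)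
    (pdA pdG : Fin n → Fin n → ℝ)
    (hAG : ∀ p q, ∑ c, Am p c * Gm c q = kron p q)
    (hGA : ∀ p q, ∑ c, Gm p c * Am c q = kron p q)
    (hpdG : ∀ e q, pdG e q = ∑ b, Gm e b * Γh b q + ∑ b, Γh b e * Gm b q)
    (hrel : ∀ p q, pdA p q = -∑ d, ∑ c, Am p d * pdG d c * Am c q)
    (p q : Fin n) :
    pdA p q = -∑ d, Γh p d * Am d q - ∑ d, Γh q d * Am p d := by
  have hAG' : Am * Gm = 1 := mul_eq_one_of_contract hAG
  have hGA' : Gm * Am = 1 := mul_eq_one_of_contract hGA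
  set C : Matrix (Fin n) (Fin n) ℝ := Matrix.of Γh with hC
  have hpdG' : (Matrix.of pdG) = Gm * C + Cᵀ * Gm := by
    ext e' q'
    rw [Matrix.of_apply, hpdG e' q']
    simp only [Matrix.add_apply, Matrix.mul_apply, Matrix.transpose_apply, hC, Matrix.of_apply]
  have hrel' : (Matrix.of pdA) = -(Am * (Matrix.of pdG) * Am) := by
    ext p' q'
    rw [Matrix.of_apply, hrel p' q']
    rw [Matrix.neg_apply, Matrix.mul_apply]
    rw [neg_inj, Finset.sum_comm]
    refine Finset.sum_congr rfl fun c _ => ?_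
    rw [Matrix.mul_apply, Finset.sum_mul]
    exact Finset.sum_congr rfl fun d _ => by rw [Matrix.of_apply]
  have key : (Matrix.of pdA) = -(C * Am) - Am * Cᵀ := by
    rw [hrel', hpdG']
    have expand : -(Am * (Gm * C + Cᵀ * Gm) * Am)
        = -((Am * Gm) * (C * Am)) - Am * Cᵀ * (Gm * Am) := by noncomm_ring
    rw [expand, hAG', hGA', Matrix.mul_one, Matrix.one_mul]
  have hk := congrFun (congrFun key p) q
  simp only [Matrix.of_apply] at hk
  rw [hk]
  simp only [Matrix.sub_apply, Matrix.neg_apply, Matrix.mul_apply, Matrix.transpose_apply, hC,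
    Matrix.of_apply]
  congr 1
  exact Finset.sum_congr rfl fun d _ => by ring


open Matrix
variable {n : ℕ} {U : Set (Fin n → ℝ)} {x : Fin n → ℝ} {a : Fin n}

variable {f : (Fin n → ℝ) → ℝ}

lemma pd_sq (he : DifferentiableAt ℝ f x) :
    pd (fun y => f y ^ 2) a x = 2 * f x * pd f a x := by
  have hrw : (fun y => f y ^ 2) = fun y => f y * f y := funext fun y => by ring
  rw [hrw, pd_mul he he]; ring

lemma pd_log (hf : DifferentiableAt ℝ f x) (hne : f x ≠ 0) :
    pd (fun y => Real.log (f y)) a x = pd f a x / f x := by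
  rw [pd_comp_hasDerivAt (Real.hasDerivAt_log hne) hf]
  field_simp

lemma pd_rpow {p : ℝ} (hf : DifferentiableAt ℝ f x) (hne : f x ≠ 0) :
    pd (fun y => f y ^ p) a x = p * f x ^ (p - 1) * pd f a x := by
  rw [pd_comp_hasDerivAt (Real.hasDerivAt_rpow_const (Or.inl hne)) hf]

lemma contDiffOn_rpow_const {p : ℝ} (hf : ContDiffOn ℝ (⊤ : ℕ∞) f U) (hpos : ∀ y ∈ U, 0 < f y) :
    ContDiffOn ℝ (⊤ : ℕ∞) (fun y => f y ^ p) U := by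
  refine ContDiffOn.congr
    (f := fun y => Real.exp (Real.log (f y) * p)) ?_ ?_
  · exact Real.contDiff_exp.comp_contDiffOn
      ((hf.log fun y hy => (hpos y hy).ne').mul contDiffOn_const)
  · intro y hy
    rw [Real.rpow_def_of_pos (hpos y hy)]

lemma adjugate_eq_det_smul_inv {A : Matrix (Fin n) (Fin n) ℝ} (h : A.det ≠ 0) :
    A.adjugate = A.det • A⁻¹ := by
  rw [Matrix.inv_def, smul_smul, Ring.inverse_eq_inv', mul_inv_cancel₀ h, one_smul]

/-- trace-type contraction: `∑_{p,q} W_{qp} (∑_d T_{pd} S_{dq}) = ∑_p T_{pp}`. -/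
lemma L_tr1 (W Sm : Matrix (Fin n) (Fin n) ℝ) (T : Fin n → Fin n → ℝ)
    (hcontract : ∀ d p, ∑ q, Sm d q * W q p = kron d p) :
    ∑ p, ∑ q, W q p * (∑ d, T p d * Sm d q) = ∑ p, T p p := by
  have h1 : ∀ p, ∑ q, W q p * (∑ d, T p d * Sm d q) = ∑ d, T p d * kron d p := by
    intro p
    have h2 : ∀ q, W q p * (∑ d, T p d * Sm d q) = ∑ d, T p d * (Sm d q * W q p) := by
      intro q
      rw [Finset.mul_sum]
      exact Finset.sum_congr rfl fun d _ => by ring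
    rw [Finset.sum_congr rfl fun q _ => h2 q, Finset.sum_comm]
    refine Finset.sum_congr rfl fun d _ => ?_
    rw [← Finset.mul_sum, hcontract d p]
  rw [Finset.sum_congr rfl fun p _ => h1 p]
  exact Finset.sum_congr rfl fun p _ => sum_mul_kron _ _

/-- trace-type contraction, other slot. -/
lemma L_tr2 (W Sm : Matrix (Fin n) (Fin n) ℝ) (T : Fin n → Fin n → ℝ)
    (hWsym : ∀ p q, W p q = W q p) (hSsym : ∀ p q, Sm p q = Sm q p)
    (hcontract : ∀ d p, ∑ q, Sm d q * W q p = kron d p) :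
    ∑ p, ∑ q, W q p * (∑ d, T q d * Sm p d) = ∑ p, T p p := by
  rw [Finset.sum_comm]
  have h1 : ∀ q, ∑ p, W q p * (∑ d, T q d * Sm p d) = ∑ p, W p q * (∑ d, T q d * Sm d p) := by
    intro q
    refine Finset.sum_congr rfl fun p _ => ?_
    rw [hWsym q p]
    congr 1
    exact Finset.sum_congr rfl fun d _ => by rw [hSsym p d]
  rw [Finset.sum_congr rfl fun q _ => h1 q]
  exact L_tr1 W Sm (fun q d => T q d) (fun d p => hcontract d p)

/-- kron-type contraction for the `μ` terms. -/
lemma L_kron (W : Matrix (Fin n) (Fin n) ℝ) (μv : Fin n → ℝ) (a : Fin n)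
    (hWsym : ∀ p q, W p q = W q p) :
    ∑ p, ∑ q, W q p * (kron a p * μv q + kron a q * μv p)
      = 2 * ∑ q, W a q * μv q := by
  have hsplit : ∀ p q, W q p * (kron a p * μv q + kron a q * μv p)
      = kron a p * (W q p * μv q) + kron a q * (W q p * μv p) := fun p q => by ring
  simp only [hsplit]
  rw [Finset.sum_congr rfl fun p (_ : p ∈ Finset.univ) => Finset.sum_add_distrib,
    Finset.sum_add_distrib]
  have h1 : ∑ p, ∑ q, kron a p * (W q p * μv q) = ∑ q, W a q * μv q := by
    have : ∀ p, ∑ q, kron a p * (W q p * μv q) = kron a p * ∑ q, W q p * μv q := fun p =>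
      (Finset.mul_sum _ _ _).symm
    rw [Finset.sum_congr rfl fun p _ => this p, sum_kron_mul' _ a]
    exact Finset.sum_congr rfl fun q _ => by rw [hWsym q a]
  have h2 : ∑ p, ∑ q, kron a q * (W q p * μv p) = ∑ q, W a q * μv q := by
    rw [Finset.sum_comm]
    have : ∀ q, ∑ p, kron a q * (W q p * μv p) = kron a q * ∑ p, W q p * μv p := fun q =>
      (Finset.mul_sum _ _ _).symm
    rw [Finset.sum_congr rfl fun q _ => this q, sum_kron_mul' _ a]
  rw [h1, h2]; ring

/-- `∑_d S_{dc} m_d = μ_c` where `m = W μ`. -/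
lemma L_mu (W Sm : Matrix (Fin n) (Fin n) ℝ) (μv : Fin n → ℝ) (c : Fin n)
    (hSsym : ∀ p q, Sm p q = Sm q p)
    (hcontract : ∀ d p, ∑ q, Sm d q * W q p = kron d p) :
    ∑ d, Sm d c * (∑ q, W d q * μv q) = μv c := by
  have h1 : ∀ d, Sm d c * (∑ q, W d q * μv q) = ∑ q, (Sm c d * W d q) * μv q := by
    intro d
    rw [Finset.mul_sum]
    exact Finset.sum_congr rfl fun q _ => by rw [hSsym d c]; ring
  rw [Finset.sum_congr rfl fun d _ => h1 d, Finset.sum_comm]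
  have h2 : ∀ q, ∑ d, (Sm c d * W d q) * μv q = kron c q * μv q := by
    intro q
    rw [← Finset.sum_mul, hcontract c q]
  rw [Finset.sum_congr rfl fun q _ => h2 q]
  exact sum_kron_mul' _ _


theorem forward {n : ℕ} {U : Set (Fin n → ℝ)} (hU : IsOpen U)
    {Γ : (Fin n → ℝ) → Fin n → Fin n → Fin n → ℝ}
    (hΓtf : ∀ x a b c, Γ x a b c = Γ x c b a)
    {e : (Fin n → ℝ) → ℝ} (hesm : ContDiffOn ℝ (⊤ : ℕ∞) e U)
    (hepos : ∀ x ∈ U, 0 < e x)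
    (hspecial : ∀ x ∈ U, ∀ a, pd e a x = (∑ b, Γ x a b b) * e x)
    {σ : (Fin n → ℝ) → Fin n → Fin n → ℝ}
    (hσ : IsMetrisabilitySolution U Γ σ) :
    IsProjectivelyCompatibleMetric U Γ (sigmaToMetric e σ) := by
  classical
  obtain ⟨hσsm, hσsym, hσpos, μ, hμsm, hμeq⟩ := hσ
  set S : (Fin n → ℝ) → Matrix (Fin n) (Fin n) ℝ := fun y => Matrix.of fun k l => σ y k l
    with hS
  set τ : (Fin n → ℝ) → ℝ := fun y => e y ^ 2 * (S y).det with hτ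
  set A : (Fin n → ℝ) → Matrix (Fin n) (Fin n) ℝ := fun y => Matrix.of fun i j => τ y * σ y i j
    with hA
  have hgA : ∀ (y : Fin n → ℝ) (a b : Fin n), sigmaToMetric e σ y a b = (A y)⁻¹ a b :=
    fun _ _ _ => rfl
  have hSentry : ∀ (p q : Fin n), (fun y => S y p q) = fun y => σ y p q := fun _ _ => rfl
  have hAentry : ∀ (p q : Fin n), (fun y => A y p q) = fun y => τ y * σ y p q := fun _ _ => rfl
  -- pointwise matrix facts
  have hSpos : ∀ y ∈ U, (S y).PosDef := fun y hy =>
    posDef_of (fun p q => hσsym y p q) (hσpos y hy)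
  have hdetS : ∀ y ∈ U, 0 < (S y).det := fun y hy => (hSpos y hy).det_pos
  have hτpos : ∀ y ∈ U, 0 < τ y := fun y hy => mul_pos (pow_pos (hepos y hy) 2) (hdetS y hy)
  have hAsym : ∀ (y : Fin n → ℝ) (p q : Fin n), A y p q = A y q p := fun y p q => by
    show τ y * σ y p q = τ y * σ y q p
    rw [hσsym y p q]
  have hApos : ∀ y ∈ U, (A y).PosDef := by
    intro y hy
    refine posDef_of (hAsym y) (fun v hv => ?_)
    have h1 : ∑ a, ∑ b, A y a b * v a * v b = τ y * ∑ a, ∑ b, σ y a b * v a * v b := by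
      rw [Finset.mul_sum]
      refine Finset.sum_congr rfl fun p _ => ?_
      rw [Finset.mul_sum]
      refine Finset.sum_congr rfl fun q _ => ?_
      show τ y * σ y p q * v p * v q = τ y * (σ y p q * v p * v q)
      ring
    rw [h1]
    exact mul_pos (hτpos y hy) (hσpos y hy v hv)
  have hdetA : ∀ y ∈ U, (A y).det ≠ 0 := fun y hy => (hApos y hy).det_pos.ne'
  -- smoothness
  have hSsm : ∀ i j, ContDiffOn ℝ (⊤ : ℕ∞) (fun y => S y i j) U := fun i j => hσsm i j
  have hdetSsm : ContDiffOn ℝ (⊤ : ℕ∞) (fun y => (S y).det) U := contDiffOn_det' hSsm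
  have hτsm : ContDiffOn ℝ (⊤ : ℕ∞) τ U := (hesm.pow 2).mul hdetSsm
  have hAsm : ∀ i j, ContDiffOn ℝ (⊤ : ℕ∞) (fun y => A y i j) U := fun i j => hτsm.mul (hσsm i j)
  have hGsm : ∀ i j, ContDiffOn ℝ (⊤ : ℕ∞) (fun y => (A y)⁻¹ i j) U := fun i j =>
    contDiffOn_inv_entry hAsm hdetA i j
  -- symmetry of the inverse (globally)
  have hGsym : ∀ (y : Fin n → ℝ) (p q : Fin n), (A y)⁻¹ p q = (A y)⁻¹ q p := by
    intro y p q
    have hAT : (A y)ᵀ = A y := by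
      ext i j; exact hAsym y j i
    have h2 : ((A y)⁻¹)ᵀ = (A y)⁻¹ := by rw [Matrix.transpose_nonsing_inv, hAT]
    have h3 := congrFun (congrFun h2 q) p
    simpa using h3
  refine ⟨fun a b => hGsm a b, fun y a b => hGsym y a b,
    fun y hy v hv => quad_of_posDef ((hApos y hy).inv) v hv,
    ⟨fun y => -(1/2) * Real.log (τ y), ?_, ?_⟩⟩
  · exact contDiffOn_const.mul (hτsm.log fun y hy => (hτpos y hy).ne')
  intro x hx a b c
  -- differentiability at x
  have hdiffσ : ∀ p q, DifferentiableAt ℝ (fun y => σ y p q) x := fun p q =>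
    diffAt_of_contDiffOn hU (hσsm p q) hx
  have hdiffτ : DifferentiableAt ℝ τ x := diffAt_of_contDiffOn hU hτsm hx
  have hdiffdetS : DifferentiableAt ℝ (fun y => (S y).det) x :=
    diffAt_of_contDiffOn hU hdetSsm hx
  have hdiffe : DifferentiableAt ℝ e x := diffAt_of_contDiffOn hU hesm hx
  have hdetSx : (S x).det ≠ 0 := (hdetS x hx).ne'
  have hτx : τ x ≠ 0 := (hτpos x hx).ne'
  -- the "mean curvature" vector  m
  set m : Fin n → ℝ := fun d => ∑ q, (S x)⁻¹ d q * μ x q with hm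
  -- inverse of S symmetric
  have hWsym : ∀ p q, (S x)⁻¹ p q = (S x)⁻¹ q p := by
    intro p q
    have hAT : (S x)ᵀ = S x := by ext i j; exact hσsym x j i
    have h2 : ((S x)⁻¹)ᵀ = (S x)⁻¹ := by rw [Matrix.transpose_nonsing_inv, hAT]
    have h3 := congrFun (congrFun h2 q) p
    simpa using h3
  have hcontrS : ∀ d p, ∑ q, S x d q * (S x)⁻¹ q p = kron d p := fun d p =>
    inv_contract_left hdetSx.isUnit d p
  -- metrisability equation, solved for the partial derivative
  have hpdσ : ∀ (a' p q : Fin n), pd (fun y => σ y p q) a' x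
      = kron a' p * μ x q + kron a' q * μ x p
        - ∑ d, Γ x a' p d * σ x d q - ∑ d, Γ x a' q d * σ x p d := by
    intro a' p q
    have h0 := hμeq x hx a' p q
    simp only [nablaSig] at h0
    linarith
  -- Jacobi formula for det S
  have hpddetS : ∀ a' : Fin n, pd (fun y => (S y).det) a' x
      = (S x).det * (2 * m a' - 2 * ∑ b', Γ x a' b' b') := by
    intro a'
    rw [pd_det (M := S) (fun p q => hdiffσ p q) a', adjugate_eq_det_smul_inv hdetSx]
    have hstep : ∀ p q : Fin n, ((S x).det • (S x)⁻¹) q p * pd (fun y => S y p q) a' x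
        = (S x).det * ((S x)⁻¹ q p * (kron a' p * μ x q + kron a' q * μ x p)
            - (S x)⁻¹ q p * (∑ d, Γ x a' p d * σ x d q)
            - (S x)⁻¹ q p * (∑ d, Γ x a' q d * σ x p d)) := by
      intro p q
      rw [Matrix.smul_apply, smul_eq_mul, hSentry p q, hpdσ a' p q]
      ring
    rw [Finset.sum_congr rfl fun p (_ : p ∈ Finset.univ) =>
      Finset.sum_congr rfl fun q (_ : q ∈ Finset.univ) => hstep p q]
    rw [Finset.sum_congr rfl fun p (_ : p ∈ Finset.univ) =>
      (Finset.mul_sum _ _ ((S x).det)).symm, ← Finset.mul_sum]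
    congr 1
    rw [Finset.sum_congr rfl fun p (_ : p ∈ Finset.univ) => Finset.sum_sub_distrib _ _,
      Finset.sum_sub_distrib]
    rw [Finset.sum_congr rfl fun p (_ : p ∈ Finset.univ) => Finset.sum_sub_distrib _ _,
      Finset.sum_sub_distrib]
    rw [L_kron ((S x)⁻¹) (μ x) a' hWsym,
      L_tr1 ((S x)⁻¹) (σ x) (fun p d => Γ x a' p d) hcontrS,
      L_tr2 ((S x)⁻¹) (σ x) (fun q d => Γ x a' q d) hWsym (fun p q => hσsym x p q) hcontrS]
    have : ∑ q, (S x)⁻¹ a' q * μ x q = m a' := rfl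
    rw [this]
    ring
  -- derivative of τ
  have hpdτ : ∀ a' : Fin n, pd τ a' x = 2 * τ x * m a' := by
    intro a'
    have h1 : pd τ a' x = pd (fun y => e y ^ 2) a' x * (S x).det
        + e x ^ 2 * pd (fun y => (S y).det) a' x := pd_mul (hdiffe.pow 2) hdiffdetS
    rw [h1, pd_sq hdiffe, hspecial x hx a', hpddetS a']
    have hτval : τ x = e x ^ 2 * (S x).det := rfl
    rw [hτval]
    ring
  -- derivative of f
  have hdifflog : DifferentiableAt ℝ (fun y => Real.log (τ y)) x := hdiffτ.log hτx
  have hpdf : ∀ a' : Fin n, pd (fun y => -(1/2) * Real.log (τ y)) a' x = -(m a') := by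
    intro a'
    rw [pd_const_mul _ hdifflog, pd_log hdiffτ hτx, hpdτ a']
    field_simp
  -- the projectively-changed connection
  set Γh : Fin n → Fin n → Fin n → ℝ :=
    fun a' b d => Γ x a' b d - m a' * kron d b - kron a' b * m d with hΓh
  have hΓhsym : ∀ a' b' c', Γh a' b' c' = Γh c' b' a' := by
    intro a' b' c'
    simp only [hΓh]
    rw [hΓtf x a' b' c', kron_symm c' b', kron_symm a' b']
    ring
  have hmu : ∀ q : Fin n, ∑ d, σ x d q * m d = μ x q := by
    intro q
    have := L_mu ((S x)⁻¹) (σ x) (μ x) q (fun p q => hσsym x p q) hcontrS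
    simpa [hm] using this
  -- ∇̂ A = 0
  have hpdA : ∀ (a' p q : Fin n), pd (fun y => A y p q) a' x
      = -∑ d, Γh a' p d * A x d q - ∑ d, Γh a' q d * A x p d := by
    intro a' p q
    have hL : pd (fun y => A y p q) a' x
        = 2 * τ x * m a' * σ x p q
          + τ x * (kron a' p * μ x q + kron a' q * μ x p
            - ∑ d, Γ x a' p d * σ x d q - ∑ d, Γ x a' q d * σ x p d) := by
      rw [hAentry p q, pd_mul hdiffτ (hdiffσ p q), hpdτ a', hpdσ a' p q]
    have e1 : ∑ d, Γh a' p d * A x d q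
        = τ x * (∑ d, Γ x a' p d * σ x d q) - m a' * (τ x * σ x p q)
          - kron a' p * (τ x * μ x q) := by
      have hsplit : ∀ d : Fin n, Γh a' p d * A x d q
          = τ x * (Γ x a' p d * σ x d q) - m a' * (kron d p * (τ x * σ x d q))
            - kron a' p * (τ x * (σ x d q * m d)) := by
        intro d
        show Γh a' p d * (τ x * σ x d q) = _
        simp only [hΓh]
        ring
      rw [Finset.sum_congr rfl fun d _ => hsplit d, Finset.sum_sub_distrib,
        Finset.sum_sub_distrib, ← Finset.mul_sum, ← Finset.mul_sum, ← Finset.mul_sum]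
      have h2 : ∑ d, kron d p * (τ x * σ x d q) = τ x * σ x p q :=
        sum_kron_mul (fun d => τ x * σ x d q) p
      have h3 : ∑ d, τ x * (σ x d q * m d) = τ x * μ x q := by
        rw [← Finset.mul_sum, hmu q]
      rw [h2, h3]
    have e2 : ∑ d, Γh a' q d * A x p d
        = τ x * (∑ d, Γ x a' q d * σ x p d) - m a' * (τ x * σ x p q)
          - kron a' q * (τ x * μ x p) := by
      have hsplit : ∀ d : Fin n, Γh a' q d * A x p d
          = τ x * (Γ x a' q d * σ x p d) - m a' * (kron d q * (τ x * σ x p d))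
            - kron a' q * (τ x * (σ x d p * m d)) := by
        intro d
        show Γh a' q d * (τ x * σ x p d) = _
        simp only [hΓh]
        rw [hσsym x d p]
        ring
      rw [Finset.sum_congr rfl fun d _ => hsplit d, Finset.sum_sub_distrib,
        Finset.sum_sub_distrib, ← Finset.mul_sum, ← Finset.mul_sum, ← Finset.mul_sum]
      have h2 : ∑ d, kron d q * (τ x * σ x p d) = τ x * σ x p q :=
        sum_kron_mul (fun d => τ x * σ x p d) q
      have h3 : ∑ d, τ x * (σ x d p * m d) = τ x * μ x p := by
        rw [← Finset.mul_sum]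
        have : ∑ d, σ x d p * m d = μ x p := hmu p
        rw [this]
      rw [h2, h3]
    rw [hL, e1, e2]
    ring
  -- contractions for A at x
  have hAGx : ∀ p q, ∑ c', A x p c' * (A x)⁻¹ c' q = kron p q := fun p q =>
    inv_contract_left (hdetA x hx).isUnit p q
  have hGAx : ∀ p q, ∑ c', (A x)⁻¹ p c' * A x c' q = kron p q := fun p q =>
    inv_contract_right (hdetA x hx).isUnit p q
  -- ∇̂ G = 0
  have hpdG : ∀ (a' e' q' : Fin n), pd (fun y => (A y)⁻¹ e' q') a' x
      = ∑ b', (A x)⁻¹ e' b' * Γh a' b' q' + ∑ b', Γh a' b' e' * (A x)⁻¹ b' q' := by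
    intro a'
    exact parallel_conj (A x) ((A x)⁻¹) (Γh a')
      (fun p q => pd (fun y => A y p q) a' x)
      (fun e' q' => pd (fun y => (A y)⁻¹ e' q') a' x)
      hAGx hGAx (hpdA a')
      (fun e' q' => pd_inv_entry hU hAsm hdetA hx e' q')
  -- Levi-Civita formula
  have final := LC_formula (A x) ((A x)⁻¹) Γh
    (fun a' e' c' => pd (fun y => (A y)⁻¹ e' c') a' x)
    (hGsym x) hAGx hΓhsym hpdG a b c
  -- rewrite the goal
  have hofg : (Matrix.of fun i j => sigmaToMetric e σ x i j)⁻¹ = A x := by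
    have h1 : (Matrix.of fun i j => sigmaToMetric e σ x i j) = (A x)⁻¹ := by
      ext i j; rfl
    rw [h1, Matrix.nonsing_inv_nonsing_inv _ (hdetA x hx).isUnit]
  rw [hofg, hpdf a, hpdf c]
  have hΓhval : Γh a b c = Γ x a b c + -m a * kron c b + kron a b * -m c := by
    simp only [hΓh]; ring
  rw [← hΓhval]
  exact final


theorem backward {n : ℕ} {U : Set (Fin n → ℝ)} (hU : IsOpen U)
    {Γ : (Fin n → ℝ) → Fin n → Fin n → Fin n → ℝ}
    {e : (Fin n → ℝ) → ℝ} (hesm : ContDiffOn ℝ (⊤ : ℕ∞) e U)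
    (hepos : ∀ x ∈ U, 0 < e x)
    (hspecial : ∀ x ∈ U, ∀ a, pd e a x = (∑ b, Γ x a b b) * e x)
    {g : (Fin n → ℝ) → Fin n → Fin n → ℝ}
    (hg : IsProjectivelyCompatibleMetric U Γ g) :
    IsMetrisabilitySolution U Γ (metricToSigma n e g) := by
  classical
  obtain ⟨hgsm, hgsym, hgpos, f, hfsm, hfeq⟩ := hg
  set G : (Fin n → ℝ) → Matrix (Fin n) (Fin n) ℝ := fun y => Matrix.of fun i j => g y i j
    with hGdef
  set Ai : (Fin n → ℝ) → Matrix (Fin n) (Fin n) ℝ := fun y => (G y)⁻¹ with hAidef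
  set cc : (Fin n → ℝ) → ℝ := fun y => e y ^ 2 * (Ai y).det with hccdef
  set ρ : (Fin n → ℝ) → ℝ := fun y => Real.rpow (cc y) (-(1 : ℝ)/((n : ℝ)+1)) with hρdef
  have hσA : ∀ (y : Fin n → ℝ) (a b : Fin n), metricToSigma n e g y a b = ρ y * Ai y a b :=
    fun _ _ _ => rfl
  have hGentry : ∀ (p q : Fin n), (fun y => G y p q) = fun y => g y p q := fun _ _ => rfl
  -- pointwise facts
  have hGpos : ∀ y ∈ U, (G y).PosDef := fun y hy =>
    posDef_of (fun p q => hgsym y p q) (hgpos y hy)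
  have hdetGne : ∀ y ∈ U, (G y).det ≠ 0 := fun y hy => (hGpos y hy).det_pos.ne'
  have hAipos : ∀ y ∈ U, (Ai y).PosDef := fun y hy => (hGpos y hy).inv
  have hdetAine : ∀ y ∈ U, (Ai y).det ≠ 0 := fun y hy => (hAipos y hy).det_pos.ne'
  have hccpos : ∀ y ∈ U, 0 < cc y := fun y hy =>
    mul_pos (pow_pos (hepos y hy) 2) (hAipos y hy).det_pos
  have hρpos : ∀ y ∈ U, 0 < ρ y := fun y hy => Real.rpow_pos_of_pos (hccpos y hy) _
  -- symmetry of Ai (global)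
  have hAisym : ∀ (y : Fin n → ℝ) (p q : Fin n), Ai y p q = Ai y q p := by
    intro y p q
    have hGT : (G y)ᵀ = G y := by ext i j; exact hgsym y j i
    have h2 : ((G y)⁻¹)ᵀ = (G y)⁻¹ := by rw [Matrix.transpose_nonsing_inv, hGT]
    have h3 := congrFun (congrFun h2 q) p
    simpa using h3
  -- smoothness
  have hGsm : ∀ i j, ContDiffOn ℝ (⊤ : ℕ∞) (fun y => G y i j) U := fun i j => hgsm i j
  have hAism : ∀ i j, ContDiffOn ℝ (⊤ : ℕ∞) (fun y => Ai y i j) U := fun i j =>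
    contDiffOn_inv_entry hGsm hdetGne i j
  have hdetAism : ContDiffOn ℝ (⊤ : ℕ∞) (fun y => (Ai y).det) U := contDiffOn_det' hAism
  have hccsm : ContDiffOn ℝ (⊤ : ℕ∞) cc U := (hesm.pow 2).mul hdetAism
  have hρsm : ContDiffOn ℝ (⊤ : ℕ∞) ρ U := contDiffOn_rpow_const hccsm hccpos
  -- the 1-form Υ is smooth
  have hfd : ∀ d : Fin n, ContDiffOn ℝ (⊤ : ℕ∞) (fun y => pd f d y) U := by
    intro d
    have h1 : ContDiffOn ℝ (⊤ : ℕ∞) (fun y => fderiv ℝ f y) U :=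
      hfsm.fderiv_of_isOpen hU (by simp)
    exact h1.clm_apply contDiffOn_const
  refine ⟨fun b c => hρsm.mul (hAism b c),
    fun y a b => by rw [hσA y a b, hσA y b a, hAisym y a b],
    ?_,
    ⟨fun y q => -(ρ y * ∑ d, pd f d y * Ai y d q), ?_, ?_⟩⟩
  · intro y hy v hv
    have h1 : ∑ a, ∑ b, metricToSigma n e g y a b * v a * v b
        = ρ y * ∑ a, ∑ b, Ai y a b * v a * v b := by
      rw [Finset.mul_sum]
      refine Finset.sum_congr rfl fun p _ => ?_
      rw [Finset.mul_sum]
      refine Finset.sum_congr rfl fun q _ => ?_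
      rw [hσA y p q]
      ring
    rw [h1]
    exact mul_pos (hρpos y hy) (quad_of_posDef (hAipos y hy) v hv)
  · intro q
    refine ContDiffOn.neg ?_
    refine hρsm.mul (ContDiffOn.sum fun d _ => (hfd d).mul (hAism d q))
  intro x hx a b c
  -- differentiability at x
  have hdiffg : ∀ p q, DifferentiableAt ℝ (fun y => g y p q) x := fun p q =>
    diffAt_of_contDiffOn hU (hgsm p q) hx
  have hdiffAi : ∀ p q, DifferentiableAt ℝ (fun y => Ai y p q) x := fun p q =>
    diffAt_of_contDiffOn hU (hAism p q) hx
  have hdiffdetAi : DifferentiableAt ℝ (fun y => (Ai y).det) x :=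
    diffAt_of_contDiffOn hU hdetAism hx
  have hdiffcc : DifferentiableAt ℝ cc x := diffAt_of_contDiffOn hU hccsm hx
  have hdiffρ : DifferentiableAt ℝ ρ x := diffAt_of_contDiffOn hU hρsm hx
  have hdiffe : DifferentiableAt ℝ e x := diffAt_of_contDiffOn hU hesm hx
  have hccne : cc x ≠ 0 := (hccpos x hx).ne'
  have hn1 : ((n : ℝ) + 1) ≠ 0 := by positivity
  set Υ : Fin n → ℝ := fun d => pd f d x with hΥdef
  set Γh : Fin n → Fin n → Fin n → ℝ :=
    fun a' b' d => Γ x a' b' d + Υ a' * kron d b' + kron a' b' * Υ d with hΓhdef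
  -- contractions at x
  have hGAx : ∀ p q, ∑ c', G x p c' * Ai x c' q = kron p q := fun p q =>
    inv_contract_left (hdetGne x hx).isUnit p q
  have hAGx : ∀ p q, ∑ c', Ai x p c' * G x c' q = kron p q := fun p q =>
    inv_contract_right (hdetGne x hx).isUnit p q
  have hGsymx : ∀ p q, G x p q = G x q p := fun p q => hgsym x p q
  -- the hypothesis in Γh form
  have hLC : ∀ a' b' c', (1/2) * ∑ d, Ai x b' d *
      (pd (fun y => g y d c') a' x + pd (fun y => g y d a') c' x
        - pd (fun y => g y a' c') d x) = Γh a' b' c' := by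
    intro a' b' c'
    have h0 := hfeq x hx a' b' c'
    simp only [hΓhdef, hΥdef]
    exact h0
  have hpdGsym : ∀ (a' d c' : Fin n),
      pd (fun y => g y d c') a' x = pd (fun y => g y c' d) a' x := by
    intro a' d c'
    have : (fun y => g y d c') = fun y => g y c' d := funext fun y => hgsym y d c'
    rw [this]
  -- ∇̂ G = 0
  have hpdG : ∀ (a' e' c' : Fin n), pd (fun y => g y e' c') a' x
      = ∑ b', G x e' b' * Γh a' b' c' + ∑ b', Γh a' b' e' * G x b' c' :=
    fun a' e' c' => parallel_of_LC (Ai x) (G x) Γh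
      (fun a'' d c' => pd (fun y => g y d c') a'' x)
      hGsymx hGAx (fun a'' d c' => hpdGsym a'' d c') hLC a' e' c'
  -- ∇̂ Ai = 0
  have hpdAi : ∀ (a' p q : Fin n), pd (fun y => Ai y p q) a' x
      = -∑ d, Γh a' p d * Ai x d q - ∑ d, Γh a' q d * Ai x p d := by
    intro a'
    refine parallel_conj' (Ai x) (G x) (Γh a')
      (fun p q => pd (fun y => Ai y p q) a' x)
      (fun d c' => pd (fun y => g y d c') a' x)
      hAGx hGAx (hpdG a') ?_
    intro p q
    exact pd_inv_entry hU hGsm hdetGne hx p q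
  -- trace of Γh
  have htrΓh : ∀ a', ∑ p, Γh a' p p = (∑ p, Γ x a' p p) + ((n : ℝ) + 1) * Υ a' := by
    intro a'
    simp only [hΓhdef]
    rw [Finset.sum_add_distrib, Finset.sum_add_distrib]
    have h1 : ∑ p : Fin n, Υ a' * kron p p = (n : ℝ) * Υ a' := by
      have : ∀ p : Fin n, Υ a' * kron p p = Υ a' := fun p => by
        simp [kron]
      rw [Finset.sum_congr rfl fun p _ => this p, Finset.sum_const, Finset.card_univ,
        Fintype.card_fin, nsmul_eq_mul]
    have h2 : ∑ p : Fin n, kron a' p * Υ p = Υ a' := sum_kron_mul' Υ a'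
    rw [h1, h2]
    ring
  -- Jacobi for det Ai
  have hinvAi : (Ai x)⁻¹ = G x := Matrix.nonsing_inv_nonsing_inv _ (hdetGne x hx).isUnit
  have hpddetAi : ∀ a' : Fin n, pd (fun y => (Ai y).det) a' x
      = (Ai x).det * (0 - (∑ p, Γh a' p p) - (∑ p, Γh a' p p)) := by
    intro a'
    rw [pd_det (M := Ai) (fun p q => hdiffAi p q) a', adjugate_eq_det_smul_inv (hdetAine x hx),
      hinvAi]
    have hstep : ∀ p q : Fin n, ((Ai x).det • G x) q p * pd (fun y => Ai y p q) a' x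
        = (Ai x).det * ((0 : ℝ) - G x q p * (∑ d, Γh a' p d * Ai x d q)
            - G x q p * (∑ d, Γh a' q d * Ai x p d)) := by
      intro p q
      rw [Matrix.smul_apply, smul_eq_mul, hpdAi a' p q]
      ring
    rw [Finset.sum_congr rfl fun p (_ : p ∈ Finset.univ) =>
      Finset.sum_congr rfl fun q (_ : q ∈ Finset.univ) => hstep p q]
    rw [Finset.sum_congr rfl fun p (_ : p ∈ Finset.univ) =>
      (Finset.mul_sum _ _ ((Ai x).det)).symm, ← Finset.mul_sum]
    congr 1
    rw [Finset.sum_congr rfl fun p (_ : p ∈ Finset.univ) => Finset.sum_sub_distrib _ _,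
      Finset.sum_sub_distrib]
    rw [Finset.sum_congr rfl fun p (_ : p ∈ Finset.univ) => Finset.sum_sub_distrib _ _,
      Finset.sum_sub_distrib]
    have hcontrAi : ∀ d p, ∑ q, Ai x d q * G x q p = kron d p := fun d p =>
      inv_contract_right (hdetGne x hx).isUnit d p
    rw [L_tr1 (G x) (Ai x) (fun p d => Γh a' p d) hcontrAi,
      L_tr2 (G x) (Ai x) (fun q d => Γh a' q d) hGsymx (hAisym x) hcontrAi]
    simp
  -- derivative of cc
  have hpdcc : ∀ a' : Fin n, pd cc a' x = cc x * (-2 * ((n : ℝ) + 1) * Υ a') := by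
    intro a'
    have h1 : pd cc a' x = pd (fun y => e y ^ 2) a' x * (Ai x).det
        + e x ^ 2 * pd (fun y => (Ai y).det) a' x := pd_mul (hdiffe.pow 2) hdiffdetAi
    rw [h1, pd_sq hdiffe, hspecial x hx a', hpddetAi a', htrΓh a']
    have hccval : cc x = e x ^ 2 * (Ai x).det := rfl
    rw [hccval]
    ring
  -- derivative of ρ
  have hpdρ : ∀ a' : Fin n, pd ρ a' x = 2 * Υ a' * ρ x := by
    intro a'
    have hρx : ρ x = cc x ^ (-(1 : ℝ)/((n : ℝ)+1)) := rfl
    have h1 : pd ρ a' x = (-(1 : ℝ)/((n : ℝ)+1)) * cc x ^ ((-(1 : ℝ)/((n : ℝ)+1)) - 1)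
        * pd cc a' x := pd_rpow hdiffcc hccne
    rw [h1, hpdcc a', hρx, Real.rpow_sub_one hccne]
    field_simp
  -- assemble the metrisability equation
  have hpdσ' : pd (fun y => metricToSigma n e g y b c) a x
      = 2 * Υ a * (ρ x * Ai x b c)
        + ρ x * (-∑ d, Γh a b d * Ai x d c - ∑ d, Γh a c d * Ai x b d) := by
    have hrw : (fun y => metricToSigma n e g y b c) = fun y => ρ y * Ai y b c :=
      funext fun y => hσA y b c
    rw [hrw, pd_mul hdiffρ (hdiffAi b c), hpdρ a, hpdAi a b c]
    ring
  have e1 : ∑ d, Γ x a b d * metricToSigma n e g x d c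
      = ρ x * (∑ d, Γh a b d * Ai x d c) - Υ a * (ρ x * Ai x b c)
        - kron a b * (ρ x * ∑ d, Υ d * Ai x d c) := by
    have hsplit : ∀ d : Fin n, Γ x a b d * metricToSigma n e g x d c
        = ρ x * (Γh a b d * Ai x d c) - Υ a * (kron d b * (ρ x * Ai x d c))
          - kron a b * (ρ x * (Υ d * Ai x d c)) := by
      intro d
      rw [hσA x d c]
      simp only [hΓhdef]
      ring
    rw [Finset.sum_congr rfl fun d _ => hsplit d, Finset.sum_sub_distrib,
      Finset.sum_sub_distrib, ← Finset.mul_sum, ← Finset.mul_sum, ← Finset.mul_sum,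
      ← Finset.mul_sum]
    rw [sum_kron_mul (fun d => ρ x * Ai x d c) b]
  have e2 : ∑ d, Γ x a c d * metricToSigma n e g x b d
      = ρ x * (∑ d, Γh a c d * Ai x b d) - Υ a * (ρ x * Ai x b c)
        - kron a c * (ρ x * ∑ d, Υ d * Ai x d b) := by
    have hsplit : ∀ d : Fin n, Γ x a c d * metricToSigma n e g x b d
        = ρ x * (Γh a c d * Ai x b d) - Υ a * (kron d c * (ρ x * Ai x b d))
          - kron a c * (ρ x * (Υ d * Ai x d b)) := by
      intro d
      rw [hσA x b d]
      simp only [hΓhdef]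
      rw [hAisym x d b]
      ring
    rw [Finset.sum_congr rfl fun d _ => hsplit d, Finset.sum_sub_distrib,
      Finset.sum_sub_distrib, ← Finset.mul_sum, ← Finset.mul_sum, ← Finset.mul_sum,
      ← Finset.mul_sum]
    rw [sum_kron_mul (fun d => ρ x * Ai x b d) c, hAisym x b c]
  show pd (fun y => metricToSigma n e g y b c) a x
      + ∑ d, Γ x a b d * metricToSigma n e g x d c
      + ∑ d, Γ x a c d * metricToSigma n e g x b d
      = kron a b * -(ρ x * ∑ d, pd f d x * Ai x d c)
        + kron a c * -(ρ x * ∑ d, pd f d x * Ai x d b)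
  rw [hpdσ', e1, e2]
  have hu1 : ∑ d, pd f d x * Ai x d c = ∑ d, Υ d * Ai x d c := rfl
  have hu2 : ∑ d, pd f d x * Ai x d b = ∑ d, Υ d * Ai x d b := rfl
  rw [hu1, hu2]
  ring


lemma roundtrip1 {n : ℕ} {e : (Fin n → ℝ) → ℝ} {σ : (Fin n → ℝ) → Fin n → Fin n → ℝ}
    (x : Fin n → ℝ) (hepos : 0 < e x)
    (hsym : ∀ b c, σ x b c = σ x c b)
    (hpos : ∀ v : Fin n → ℝ, v ≠ 0 → 0 < ∑ a, ∑ b, σ x a b * v a * v b) (a b : Fin n) :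
    metricToSigma n e (sigmaToMetric e σ) x a b = σ x a b := by
  classical
  set S : Matrix (Fin n) (Fin n) ℝ := Matrix.of fun k l => σ x k l with hSdef
  have hSpos : S.PosDef := posDef_of hsym hpos
  set τ : ℝ := e x ^ 2 * S.det with hτdef
  have hτpos : 0 < τ := mul_pos (pow_pos hepos 2) hSpos.det_pos
  set A : Matrix (Fin n) (Fin n) ℝ :=
    Matrix.of fun i j => (e x ^ 2 * (Matrix.of fun k l => σ x k l).det) * σ x i j with hAdef
  have hAs : A = τ • S := by
    ext i j
    show (e x ^ 2 * (Matrix.of fun k l => σ x k l).det) * σ x i j = τ * S i j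
    rfl
  have hdetA : A.det = τ ^ n * S.det := by
    rw [hAs, Matrix.det_smul, Fintype.card_fin]
  have hdetAne : A.det ≠ 0 := by
    rw [hdetA]
    exact (mul_pos (pow_pos hτpos n) hSpos.det_pos).ne'
  have hof : (Matrix.of fun i j => sigmaToMetric e σ x i j) = A⁻¹ := by
    ext i j; rfl
  show Real.rpow (e x ^ 2 * ((Matrix.of fun i j => sigmaToMetric e σ x i j)⁻¹).det)
      (-(1 : ℝ) / ((n : ℝ) + 1))
      * ((Matrix.of fun i j => sigmaToMetric e σ x i j)⁻¹ a b) = σ x a b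
  rw [hof, Matrix.nonsing_inv_nonsing_inv _ hdetAne.isUnit, hdetA]
  have hscal : e x ^ 2 * (τ ^ n * S.det) = τ ^ (n + 1) := by
    rw [pow_succ]
    ring
  rw [hscal]
  have hrpow : Real.rpow (τ ^ (n + 1)) (-(1 : ℝ) / ((n : ℝ) + 1)) = τ⁻¹ := by
    show (τ ^ (n + 1) : ℝ) ^ (-(1 : ℝ) / ((n : ℝ) + 1)) = τ⁻¹
    rw [← Real.rpow_natCast τ (n + 1), ← Real.rpow_mul hτpos.le]
    have hexp : ((n + 1 : ℕ) : ℝ) * (-(1 : ℝ) / ((n : ℝ) + 1)) = -1 := by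
      have hn1 : ((n : ℝ) + 1) ≠ 0 := by positivity
      push_cast
      field_simp
    rw [hexp, Real.rpow_neg_one]
  rw [hrpow]
  have hAab : A a b = τ * σ x a b := rfl
  rw [hAab, ← mul_assoc, inv_mul_cancel₀ hτpos.ne', one_mul]

lemma roundtrip2 {n : ℕ} {e : (Fin n → ℝ) → ℝ} {g : (Fin n → ℝ) → Fin n → Fin n → ℝ}
    (x : Fin n → ℝ) (hepos : 0 < e x)
    (hsym : ∀ b c, g x b c = g x c b)
    (hpos : ∀ v : Fin n → ℝ, v ≠ 0 → 0 < ∑ a, ∑ b, g x a b * v a * v b) (a b : Fin n) :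
    sigmaToMetric e (metricToSigma n e g) x a b = g x a b := by
  classical
  set G : Matrix (Fin n) (Fin n) ℝ := Matrix.of fun i j => g x i j with hGdef
  have hGpos : G.PosDef := posDef_of hsym hpos
  have hdetGne : G.det ≠ 0 := hGpos.det_pos.ne'
  set Ai : Matrix (Fin n) (Fin n) ℝ := G⁻¹ with hAidef
  have hAipos : Ai.PosDef := hGpos.inv
  set cc : ℝ := e x ^ 2 * Ai.det with hccdef
  have hccpos : 0 < cc := mul_pos (pow_pos hepos 2) hAipos.det_pos
  set p0 : ℝ := -(1 : ℝ) / ((n : ℝ) + 1) with hp0def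
  set ρ : ℝ := cc ^ p0 with hρdef
  have hρpos : 0 < ρ := Real.rpow_pos_of_pos hccpos _
  have hσ' : ∀ i j : Fin n, metricToSigma n e g x i j = ρ * Ai i j := fun _ _ => rfl
  have hofσ : (Matrix.of fun k l => metricToSigma n e g x k l) = ρ • Ai := by
    ext i j
    show metricToSigma n e g x i j = ρ * Ai i j
    exact hσ' i j
  have hdet : (Matrix.of fun k l => metricToSigma n e g x k l).det = ρ ^ n * Ai.det := by
    rw [hofσ, Matrix.det_smul, Fintype.card_fin]
  have hscalar : (e x ^ 2 * (Matrix.of fun k l => metricToSigma n e g x k l).det) * ρ = 1 := by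
    rw [hdet]
    have h1 : e x ^ 2 * (ρ ^ n * Ai.det) * ρ = cc * ρ ^ (n + 1) := by
      rw [hccdef, pow_succ]
      ring
    rw [h1]
    have h2 : ρ ^ (n + 1) = cc ^ (p0 * ((n : ℝ) + 1)) := by
      rw [hρdef, ← Real.rpow_natCast (cc ^ p0) (n + 1), ← Real.rpow_mul hccpos.le]
      push_cast
      ring_nf
    have h3 : p0 * ((n : ℝ) + 1) = -1 := by
      rw [hp0def]
      have hn1 : ((n : ℝ) + 1) ≠ 0 := by positivity
      field_simp
    rw [h2, h3, Real.rpow_neg_one, mul_inv_cancel₀ hccpos.ne']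
  have hmat : (Matrix.of fun i j =>
      (e x ^ 2 * (Matrix.of fun k l => metricToSigma n e g x k l).det)
        * metricToSigma n e g x i j) = Ai := by
    ext i j
    show (e x ^ 2 * (Matrix.of fun k l => metricToSigma n e g x k l).det)
        * metricToSigma n e g x i j = Ai i j
    rw [hσ' i j, ← mul_assoc, hscalar, one_mul]
  show (Matrix.of fun i j =>
      (e x ^ 2 * (Matrix.of fun k l => metricToSigma n e g x k l).det)
        * metricToSigma n e g x i j)⁻¹ a b = g x a b
  rw [hmat, hAidef, Matrix.nonsing_inv_nonsing_inv _ hdetGne.isUnit]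
  rfl

end MetAux

/-- for a special connection `Γ` with parallel volume density `e`,
the assignments `σ ↦ g` and `g ↦ σ` above are mutually inverse bijections
between positive-definite metrisability solutions and metrics whose Levi-Civita
connection is projectively equivalent to `Γ` via an exact 1-form. -/
theorem metrisability_solutions_biject_with_compatible_metrics
    {n : ℕ} (hn : 2 ≤ n) (U : Set (Fin n → ℝ)) (hU : IsOpen U)
    (Γ : (Fin n → ℝ) → Fin n → Fin n → Fin n → ℝ)
    (hΓtf : ∀ x a b c, Γ x a b c = Γ x c b a)
    (hΓsm : ∀ a b c, ContDiffOn ℝ (⊤ : ℕ∞) (fun x => Γ x a b c) U)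
    (e : (Fin n → ℝ) → ℝ) (hesm : ContDiffOn ℝ (⊤ : ℕ∞) e U)
    (hepos : ∀ x ∈ U, 0 < e x)
    (hspecial : ∀ x ∈ U, ∀ a, pd e a x = (∑ b, Γ x a b b) * e x) :
    (∀ σ, IsMetrisabilitySolution U Γ σ →
      IsProjectivelyCompatibleMetric U Γ (sigmaToMetric e σ)) ∧
    (∀ g, IsProjectivelyCompatibleMetric U Γ g →
      IsMetrisabilitySolution U Γ (metricToSigma n e g)) ∧
    (∀ σ, IsMetrisabilitySolution U Γ σ →
      ∀ x ∈ U, ∀ a b, metricToSigma n e (sigmaToMetric e σ) x a b = σ x a b) ∧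
    (∀ g, IsProjectivelyCompatibleMetric U Γ g →
      ∀ x ∈ U, ∀ a b, sigmaToMetric e (metricToSigma n e g) x a b = g x a b) := by
  refine ⟨fun σ hσ => MetAux.forward hU hΓtf hesm hepos hspecial hσ,
    fun g hg => MetAux.backward hU hesm hepos hspecial hg, ?_, ?_⟩
  · intro σ hσ x hx a b
    exact MetAux.roundtrip1 x (hepos x hx) (hσ.2.1 x) (hσ.2.2.1 x hx) a b
  · intro g hg x hx a b
    exact MetAux.roundtrip2 x (hepos x hx) (hg.2.1 x) (hg.2.2.1 x hx) a b
end
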